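/- arXiv:1412.5822 — 11 statements merged into one kernel-verified Lean document; each statement's English description precedes it below -/
import Mathlib

section
/- Let G be a finite simple graph on n vertices with minimum degree at least 1, such that no two vertices of degree 1 are adjacent. Then G has at least ⌈2n/3⌉ edges. -/
/-!
Every vertex has degree at least 2 except the leaves (vertices of degree 1), so
`2n ≤ ∑ deg + #leaves = 2|E| + #leaves`. Sending each leaf to its pendant edge is injective,
because two leaves sharing an edge would be adjacent; hence `#leaves ≤ |E|` and `2n ≤ 3|E|`.
-/

open Finset

namespace SimpleGraph

variable {V : Type*} [Fintype V] (G : SimpleGraph V) [DecidableRel G.Adj]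

theorem two_mul_card_le_sum_degrees_add_card_leaves (hmin : ∀ v, 1 ≤ G.degree v) :
    2 * Fintype.card V ≤ ∑ v, G.degree v + #{v | G.degree v = 1} := by
  rw [card_filter, ← sum_add_distrib, ← card_univ, card_eq_sum_ones, mul_sum]
  refine sum_le_sum fun v _ => ?_
  have := hmin v
  split <;> omega

theorem card_leaves_le_card_edgeFinset
    (hleaves : ∀ u v, G.degree u = 1 → G.degree v = 1 → ¬ G.Adj u v) :
    #{v | G.degree v = 1} ≤ #G.edgeFinset := by
  have hnbr : ∀ v, ∃ w, G.degree v = 1 → G.Adj v w := fun v => by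
    by_cases hv : G.degree v = 1
    · obtain ⟨w, hw⟩ := (G.degree_pos_iff_exists_adj v).mp (by omega)
      exact ⟨w, fun _ => hw⟩
    · exact ⟨v, fun h => absurd h hv⟩
  choose f hf using hnbr
  refine card_le_card_of_injOn (fun v => s(v, f v)) (fun v hv => ?_) (fun u hu v hv huv => ?_)
  · simp only [coe_filter, Set.mem_ofPred_eq, mem_coe, mem_univ, true_and,
      mem_edgeFinset, mem_edgeSet] at hv ⊢
    exact hf v hv
  · simp only [coe_filter, Set.mem_ofPred_eq, mem_univ, true_and] at hu hv
    rcases Sym2.eq_iff.mp huv with ⟨huv, -⟩ | ⟨huv, -⟩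
    · exact huv
    · exact absurd (huv ▸ hf v hv) (hleaves v u hv hu)

end SimpleGraph

theorem stmt_0_general {V : Type*} [Fintype V]
    (G : SimpleGraph V) [DecidableRel G.Adj]
    (hmin : ∀ v : V, 1 ≤ G.degree v)
    (hdeg1 : ∀ u v : V, G.degree u = 1 → G.degree v = 1 → ¬ G.Adj u v) :
    (2 * Fintype.card V + 2) / 3 ≤ G.edgeFinset.card := by
  have hdegrees := G.two_mul_card_le_sum_degrees_add_card_leaves hmin
  have hleaves := G.card_leaves_le_card_edgeFinset hdeg1
  rw [G.sum_degrees_eq_twice_card_edges] at hdegrees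
  omega

theorem stmt_0 {V : Type*} [Fintype V] [DecidableEq V]
    (G : SimpleGraph V) [DecidableRel G.Adj]
    (hmin : ∀ v : V, 1 ≤ G.degree v)
    (hdeg1 : ∀ u v : V, G.degree u = 1 → G.degree v = 1 → ¬ G.Adj u v) :
    (2 * Fintype.card V + 2) / 3 ≤ G.edgeFinset.card :=
  stmt_0_general G hmin hdeg1
end

section
/- Let r ≥ 3 and let G be a finite simple graph on r+1 vertices with maximum degree at most r−1, such that any two vertices of degree r−1 are adjacent. Then G has at most ⌊(r+1)(3r−4)/6⌋ edges. -/
/-!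
Pass to the complement `H = Gᶜ`, in which every vertex has degree `r - deg_G v ≥ 1` and the
vertices of degree one are pairwise non-adjacent. Each edge of `H` then contains at most one
vertex of degree one, so there are at most `e(H)` of them, and the degree sum gives
`2 e(H) ≥ 2 (r + 1) - e(H)`. Hence `e(H) ≥ 2 (r + 1) / 3` and `e(G) = C(r + 1, 2) - e(H)`.
-/

open Finset

namespace SimpleGraph

variable {V : Type*} [Fintype V]

theorem card_edgeFinset_add_card_edgeFinset_compl [DecidableEq V] (G : SimpleGraph V)
    [DecidableRel G.Adj] : #G.edgeFinset + #Gᶜ.edgeFinset = (Fintype.card V).choose 2 := by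
  rw [← card_union_of_disjoint (disjoint_edgeFinset.mpr disjoint_compl_right), ← edgeFinset_sup,
    ← card_edgeFinset_top_eq_card_choose_two]
  congr!
  exact sup_compl_eq_top

variable (H : SimpleGraph V) [DecidableRel H.Adj]

theorem card_degree_eq_one_le_card_edgeFinset
    (hindep : ∀ u v, H.degree u = 1 → H.degree v = 1 → ¬H.Adj u v) :
    #{v | H.degree v = 1} ≤ #H.edgeFinset := by
  refine card_le_card_of_forall_subsingleton (fun v e => v ∈ e) (fun v hv => ?_) fun e he => ?_
  · rw [mem_filter_univ] at hv
    obtain ⟨w, hvw⟩ := (H.degree_pos_iff_exists_adj v).mp (by omega)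
    exact ⟨s(v, w), H.mem_edgeFinset.mpr hvw, Sym2.mem_mk_left v w⟩
  · rintro u ⟨hu, hue⟩ v ⟨hv, hve⟩
    by_contra huv
    rw [mem_filter_univ] at hu hv
    rw [(Sym2.mem_and_mem_iff huv).mp ⟨hue, hve⟩, mem_edgeFinset, mem_edgeSet] at he
    exact hindep u v hu hv he

theorem two_mul_card_le_sum_degrees_add_card_degree_eq_one (hmin : ∀ v, 1 ≤ H.degree v) :
    2 * Fintype.card V ≤ ∑ v, H.degree v + #{v | H.degree v = 1} := by
  rw [card_filter, ← sum_add_distrib, ← card_univ, mul_comm, ← smul_eq_mul, ← sum_const]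
  exact sum_le_sum fun v _ => by have := hmin v; split_ifs <;> omega

theorem two_mul_card_le_three_mul_card_edgeFinset (hmin : ∀ v, 1 ≤ H.degree v)
    (hindep : ∀ u v, H.degree u = 1 → H.degree v = 1 → ¬H.Adj u v) :
    2 * Fintype.card V ≤ 3 * #H.edgeFinset := by
  have hsum := H.two_mul_card_le_sum_degrees_add_card_degree_eq_one hmin
  have hleaves := H.card_degree_eq_one_le_card_edgeFinset hindep
  rw [sum_degrees_eq_twice_card_edges] at hsum
  omega

end SimpleGraph

open SimpleGraph in
theorem stmt_1 {V : Type*} [Fintype V] [DecidableEq V] (r : ℕ) (hr : 3 ≤ r)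
    (hcard : Fintype.card V = r + 1)
    (G : SimpleGraph V) [DecidableRel G.Adj]
    (hmax : ∀ v : V, G.degree v ≤ r - 1)
    (hadj : ∀ u v : V, u ≠ v → G.degree u = r - 1 → G.degree v = r - 1 → G.Adj u v) :
    G.edgeFinset.card ≤ (r + 1) * (3 * r - 4) / 6 := by
  have hdeg (v : V) : Gᶜ.degree v = r - G.degree v := by rw [degree_compl, hcard]; rfl
  have hmin (v : V) : 1 ≤ Gᶜ.degree v := by have := hmax v; rw [hdeg]; omega
  have hindep (u v : V) (hu : Gᶜ.degree u = 1) (hv : Gᶜ.degree v = 1) : ¬Gᶜ.Adj u v := by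
    rw [hdeg] at hu hv
    rintro ⟨huv, hnadj⟩
    exact hnadj (hadj u v huv (by have := hmax u; omega) (by have := hmax v; omega))
  have hcompl := Gᶜ.two_mul_card_le_three_mul_card_edgeFinset hmin hindep
  have htotal := G.card_edgeFinset_add_card_edgeFinset_compl
  rw [hcard] at hcompl htotal
  have hchoose : (r + 1).choose 2 * 2 = (r + 1) * r := by
    rw [← Nat.add_one_mul_choose_eq, Nat.choose_one_right]
  have hbound : (r + 1) * (3 * r - 4) + 4 * (r + 1) = 3 * ((r + 1) * r) := by
    zify [show 4 ≤ 3 * r by omega]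
    ring
  rw [Nat.le_div_iff_mul_le (by norm_num)]
  omega
end

section
/- In a friendship r-hypergraph (r ≥ 2), every set of at most r−1 vertices is contained in at least one hyperedge. -/
theorem stmt_5 {V : Type*} [Fintype V] [DecidableEq V] (r : ℕ) (hr : 2 ≤ r)
    (hn : r + 1 ≤ Fintype.card V)
    (H : Finset (Finset V)) (huniform : ∀ e ∈ H, e.card = r)
    (hfriend : ∀ R : Finset V, R.card = r →
      ∃! x : V, x ∉ R ∧ ∀ A ⊆ R, A.card = r - 1 → insert x A ∈ H) :
    ∀ S : Finset V, S.card ≤ r - 1 → ∃ e ∈ H, S ⊆ e := by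
  intro S hS
  obtain ⟨R, hSR, hRcard⟩ := Finset.exists_superset_card_eq
    (le_trans hS (Nat.sub_le r 1)) (le_trans (Nat.le_succ r) hn)
  obtain ⟨x, ⟨hxR, hx⟩, -⟩ := hfriend R hRcard
  obtain ⟨A, hSA, hAR, hAcard⟩ := Finset.exists_subsuperset_card_eq hSR hS
    (by rw [hRcard]; exact Nat.sub_le r 1)
  exact ⟨insert x A, hx A hAR hAcard, hSA.trans (Finset.subset_insert x A)⟩
end

section
/- In a friendship r-hypergraph (r ≥ 2) on at least r+1 vertices, every hyperedge is contained in a unique copy of K_{r+1}^r. -/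
theorem stmt_6 {V : Type*} [Fintype V] [DecidableEq V] (r : ℕ) (hr : 2 ≤ r)
    (hn : r + 1 ≤ Fintype.card V)
    (H : Finset (Finset V)) (huniform : ∀ e ∈ H, e.card = r)
    (hfriend : ∀ R : Finset V, R.card = r →
      ∃! x : V, x ∉ R ∧ ∀ A ⊆ R, A.card = r - 1 → insert x A ∈ H) :
    ∀ e ∈ H, ∃! S : Finset V, e ⊆ S ∧ S.card = r + 1 ∧
      ∀ f ⊆ S, f.card = r → f ∈ H := by
  intro e he
  have hcard : e.card = r := huniform e he
  obtain ⟨x, ⟨hx, hxA⟩, huniq⟩ := hfriend e hcard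
  refine ⟨insert x e, ⟨Finset.subset_insert _ _, ?_, ?_⟩, ?_⟩
  · rw [Finset.card_insert_of_notMem hx, hcard]
  · intro f hf hfcard
    by_cases hxf : x ∈ f
    · have hA : f.erase x ⊆ e := by
        intro a ha
        have haf := Finset.mem_of_mem_erase ha
        have hax := Finset.ne_of_mem_erase ha
        rcases Finset.mem_insert.mp (hf haf) with h | h
        · exact absurd h hax
        · exact h
      have hAcard : (f.erase x).card = r - 1 := by
        rw [Finset.card_erase_of_mem hxf, hfcard]
      have := hxA (f.erase x) hA hAcard
      rwa [Finset.insert_erase hxf] at this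
    · have hfe : f ⊆ e := by
        intro a ha
        rcases Finset.mem_insert.mp (hf ha) with h | h
        · exact absurd (h ▸ ha) hxf
        · exact h
      have : f = e := Finset.eq_of_subset_of_card_le hfe (by omega)
      rwa [this]
  · rintro S ⟨heS, hScard, hSall⟩
    have hss : e ⊂ S := lt_of_le_of_ne heS (by
      intro h; rw [h] at hcard; omega)
    obtain ⟨y, hyS, hye⟩ := Finset.exists_of_ssubset hss
    have hins : insert y e ⊆ S := Finset.insert_subset hyS heS
    have hinscard : (insert y e).card = r + 1 := by
      rw [Finset.card_insert_of_notMem hye, hcard]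
    have hSeq : S = insert y e :=
      (Finset.eq_of_subset_of_card_le hins (by omega)).symm
    have hy : y = x := by
      apply huniq
      refine ⟨hye, ?_⟩
      intro A hA hAcard
      have hyA : y ∉ A := fun h => hye (hA h)
      apply hSall
      · rw [hSeq]
        exact Finset.insert_subset_insert _ hA
      · rw [Finset.card_insert_of_notMem hyA, hAcard]
        omega
    rw [hSeq, hy]
end

section
/- Bollobás's saturation bound: if H is a k-uniform hypergraph on n vertices that is K_{k+ℓ}^k-saturated (H contains no copy of the complete k-uniform hypergraph on k+ℓ vertices, but adding any non-edge creates such a copy), then |E(H)| ≥ C(n,k) − C(n−ℓ,k). -/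
open Finset

section theta
variable {w k : ℕ}

noncomputable def thetaFun (C : Finset (Fin w)) (hC : C.card = k) : Fin w → Fin w :=
  fun i => if h : (i : ℕ) < k then (C.orderIsoOfFin hC ⟨i, h⟩ : Fin w)
    else (Cᶜ.orderIsoOfFin (k := w - k) (by simp [Finset.card_compl, hC]) ⟨(i : ℕ) - k, by
      have := i.isLt; omega⟩ : Fin w)

lemma thetaFun_mem {C : Finset (Fin w)} {hC : C.card = k} {i : Fin w} (h : (i : ℕ) < k) :
    thetaFun C hC i ∈ C := by
  simp only [thetaFun, dif_pos h]
  exact (C.orderIsoOfFin hC ⟨i, h⟩).2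

lemma thetaFun_notMem {C : Finset (Fin w)} {hC : C.card = k} {i : Fin w} (h : ¬ (i : ℕ) < k) :
    thetaFun C hC i ∉ C := by
  simp only [thetaFun, dif_neg h]
  exact Finset.mem_compl.mp
    (Finset.coe_mem (Cᶜ.orderIsoOfFin (k := w - k) (by simp [Finset.card_compl, hC])
      ⟨(i : ℕ) - k, by have := i.isLt; omega⟩))

lemma thetaFun_inj (C : Finset (Fin w)) (hC : C.card = k) : Function.Injective (thetaFun C hC) := by
  intro i j hij
  by_cases hi : (i : ℕ) < k <;> by_cases hj : (j : ℕ) < k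
  · simp only [thetaFun, dif_pos hi, dif_pos hj] at hij
    have := (C.orderIsoOfFin hC).injective (Subtype.coe_injective hij)
    have := congrArg (fun x : Fin k => (x : ℕ)) this
    exact Fin.ext this
  · exact absurd (thetaFun_mem hi) (by rw [hij]; exact thetaFun_notMem hj)
  · exact absurd (thetaFun_mem hj) (by rw [← hij]; exact thetaFun_notMem hi)
  · simp only [thetaFun, dif_neg hi, dif_neg hj] at hij
    have := (Cᶜ.orderIsoOfFin (k := w - k) _).injective (Subtype.coe_injective hij)
    have := congrArg (fun x : Fin (w - k) => (x : ℕ)) this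
    simp only at this
    exact Fin.ext (by omega)

noncomputable def thetaEquiv (C : Finset (Fin w)) (hC : C.card = k) : Equiv.Perm (Fin w) :=
  Equiv.ofBijective _ (Finite.injective_iff_bijective.mp (thetaFun_inj C hC))

lemma thetaEquiv_apply (C : Finset (Fin w)) (hC : C.card = k) (i : Fin w) :
    thetaEquiv C hC i = thetaFun C hC i := rfl

lemma thetaEquiv_symm_lt {C : Finset (Fin w)} {hC : C.card = k} {i : Fin w} (hi : i ∈ C) :
    (((thetaEquiv C hC).symm i : Fin w) : ℕ) < k := by
  by_contra h
  have h2 := thetaFun_notMem (C := C) (hC := hC) h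
  rw [← thetaEquiv_apply, Equiv.apply_symm_apply] at h2
  exact h2 hi

lemma thetaEquiv_symm_ge {C : Finset (Fin w)} {hC : C.card = k} {i : Fin w} (hi : i ∉ C) :
    ¬ (((thetaEquiv C hC).symm i : Fin w) : ℕ) < k := by
  intro h
  have h2 := thetaFun_mem (C := C) (hC := hC) h
  rw [← thetaEquiv_apply, Equiv.apply_symm_apply] at h2
  exact hi h2

end theta

section pi
variable {α : Type*} [Fintype α] [LinearOrder α] [DecidableEq α] {n w k : ℕ}

noncomputable def piPerm (P : Finset α) (hP : P.card = w) (C : Finset (Fin w)) (hC : C.card = k) :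
    Equiv.Perm α :=
  Equiv.Perm.ofSubtype
    (((P.orderIsoOfFin hP).toEquiv.symm.trans (thetaEquiv C hC)).trans (P.orderIsoOfFin hP).toEquiv)

lemma piPerm_apply_notMem {P : Finset α} {hP : P.card = w} {C : Finset (Fin w)} {hC : C.card = k}
    {p : α} (hp : p ∉ P) : piPerm P hP C hC p = p :=
  Equiv.Perm.ofSubtype_apply_of_not_mem _ hp

lemma piPerm_apply_coe (P : Finset α) (hP : P.card = w) (C : Finset (Fin w)) (hC : C.card = k)
    (i : Fin w) :
    piPerm P hP C hC (P.orderIsoOfFin hP i) = P.orderIsoOfFin hP (thetaEquiv C hC i) := by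
  have hmem : ((P.orderIsoOfFin hP i : ↑P) : α) ∈ P := Finset.coe_mem _
  rw [piPerm, Equiv.Perm.ofSubtype_apply_of_mem _ hmem]
  apply congrArg Subtype.val
  simp only [Equiv.trans_apply]
  have h2 : ((P.orderIsoOfFin hP).toEquiv.symm ⟨((P.orderIsoOfFin hP) i : α), hmem⟩) = i := by
    have h1 : (⟨((P.orderIsoOfFin hP i : ↑P) : α), hmem⟩ : {x // x ∈ P}) = P.orderIsoOfFin hP i :=
      Subtype.ext rfl
    rw [h1]
    exact (P.orderIsoOfFin hP).toEquiv.symm_apply_apply i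
  rw [h2]
  rfl

lemma piPerm_mem {P : Finset α} {hP : P.card = w} {C : Finset (Fin w)} {hC : C.card = k}
    {p : α} (hp : p ∈ P) : piPerm P hP C hC p ∈ P := by
  rw [piPerm, Equiv.Perm.ofSubtype_apply_of_mem _ hp]
  exact Finset.coe_mem _

lemma piPerm_symm_mem {P : Finset α} {hP : P.card = w} {C : Finset (Fin w)} {hC : C.card = k}
    {p : α} (hp : p ∈ P) : (piPerm P hP C hC).symm p ∈ P := by
  by_contra h
  have h2 := piPerm_apply_notMem (hP := hP) (C := C) (hC := hC) h
  rw [Equiv.apply_symm_apply] at h2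
  rw [← h2] at h
  exact h hp

lemma piPerm_symm_coe (P : Finset α) (hP : P.card = w) (C : Finset (Fin w)) (hC : C.card = k)
    (i : Fin w) :
    (piPerm P hP C hC).symm (P.orderIsoOfFin hP i) =
      P.orderIsoOfFin hP ((thetaEquiv C hC).symm i) := by
  rw [Equiv.symm_apply_eq, piPerm_apply_coe, Equiv.apply_symm_apply]

lemma piPerm_congr {P Q : Finset α} (hPQ : P = Q) (hP : P.card = w) (hQ : Q.card = w)
    (C : Finset (Fin w)) (hC : C.card = k) : piPerm P hP C hC = piPerm Q hQ C hC := by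
  subst hPQ; rfl

end pi

section count

lemma good_count {V : Type*} [Fintype V] [DecidableEq V] {n w k : ℕ}
    (hn : Fintype.card V = n) (A B : Finset V) (hd : Disjoint A B)
    (hA : A.card = k) (hU : (A ∪ B).card = w) :
    Nat.factorial n ≤
      (univ.filter (fun σ : V ≃ Fin n => ∀ x ∈ A, ∀ y ∈ B, σ x < σ y)).card * w.choose k := by
  classical
  set Good := univ.filter (fun σ : V ≃ Fin n => ∀ x ∈ A, ∀ y ∈ B, σ x < σ y) with hGood
  have him : ∀ σ : V ≃ Fin n, ((A ∪ B).image σ).card = w := fun σ => by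
    rw [Finset.card_image_of_injective _ σ.injective, hU]
  set f : (V ≃ Fin n) × Finset (Fin w) → (V ≃ Fin n) := fun p =>
    if h : p.2.card = k then p.1.trans (piPerm ((A ∪ B).image p.1) (him p.1) p.2 h) else p.1
    with hf
  have hsurj : Set.SurjOn f ↑(Good ×ˢ powersetCard k (univ : Finset (Fin w)))
      ↑(univ : Finset (V ≃ Fin n)) := by
    intro τ _
    set P := (A ∪ B).image τ with hPdef
    set ε := P.orderIsoOfFin (him τ) with hε
    set C := univ.filter (fun i : Fin w => ((ε i : Fin n)) ∈ A.image τ) with hCdef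
    have hCk : C.card = k := by
      rw [← hA, ← Finset.card_image_of_injective A τ.injective]
      apply Finset.card_bij (fun i _ => ((ε i : Fin n)))
      · intro a ha; exact (Finset.mem_filter.mp ha).2
      · intro a _ b _ hab
        exact ε.injective (Subtype.coe_injective hab)
      · intro b hb
        have hbP : b ∈ P := by
          rw [hPdef]
          exact Finset.image_subset_image Finset.subset_union_left hb
        refine ⟨ε.symm ⟨b, hbP⟩, ?_, ?_⟩
        · rw [hCdef]
          simp only [Finset.mem_filter, Finset.mem_univ, true_and]
          rw [ε.apply_symm_apply]
          exact hb
        · rw [ε.apply_symm_apply]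
    set π := piPerm P (him τ) C hCk with hπ
    set σ₀ := τ.trans π.symm with hσ₀
    have himg : (A ∪ B).image σ₀ = P := by
      apply Finset.eq_of_subset_of_card_le
      · intro p hp
        obtain ⟨x, hx, rfl⟩ := Finset.mem_image.mp hp
        have hxP : τ x ∈ P := Finset.mem_image_of_mem τ hx
        exact piPerm_symm_mem hxP
      · rw [him σ₀, him τ]
    have hAmem : ∀ x ∈ A, ∃ u : Fin w, (u : ℕ) < k ∧ σ₀ x = ε u := by
      intro x hx
      have hxP : τ x ∈ P := Finset.mem_image_of_mem τ (Finset.mem_union_left B hx)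
      set i := ε.symm ⟨τ x, hxP⟩ with hi
      have hτx : ((ε i : Fin n)) = τ x := by rw [hi, ε.apply_symm_apply]
      have hiC : i ∈ C := by
        rw [hCdef]
        simp only [Finset.mem_filter, Finset.mem_univ, true_and]
        rw [hτx]
        exact Finset.mem_image_of_mem τ hx
      refine ⟨(thetaEquiv C hCk).symm i, thetaEquiv_symm_lt hiC, ?_⟩
      show π.symm (τ x) = _
      rw [← hτx, hπ]
      exact piPerm_symm_coe P (him τ) C hCk i
    have hBmem : ∀ y ∈ B, ∃ v : Fin w, ¬ (v : ℕ) < k ∧ σ₀ y = ε v := by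
      intro y hy
      have hyP : τ y ∈ P := Finset.mem_image_of_mem τ (Finset.mem_union_right A hy)
      set j := ε.symm ⟨τ y, hyP⟩ with hj
      have hτy : ((ε j : Fin n)) = τ y := by rw [hj, ε.apply_symm_apply]
      have hjC : j ∉ C := by
        rw [hCdef]
        simp only [Finset.mem_filter, Finset.mem_univ, true_and]
        rw [hτy]
        intro hmem
        obtain ⟨a, ha, haeq⟩ := Finset.mem_image.mp hmem
        have : a = y := τ.injective haeq
        subst this
        exact (Finset.disjoint_left.mp hd ha) hy
      refine ⟨(thetaEquiv C hCk).symm j, thetaEquiv_symm_ge hjC, ?_⟩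
      show π.symm (τ y) = _
      rw [← hτy, hπ]
      exact piPerm_symm_coe P (him τ) C hCk j
    have hGoodσ : σ₀ ∈ Good := by
      rw [hGood, Finset.mem_filter]
      refine ⟨Finset.mem_univ _, ?_⟩
      intro x hx y hy
      obtain ⟨u, hu, hux⟩ := hAmem x hx
      obtain ⟨v, hv, hvy⟩ := hBmem y hy
      rw [hux, hvy]
      have huv : u < v := by rw [Fin.lt_def]; omega
      exact Subtype.coe_lt_coe.mpr (ε.lt_iff_lt.mpr huv)
    refine ⟨(σ₀, C), ?_, ?_⟩
    · rw [Finset.mem_coe, Finset.mem_product]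
      exact ⟨hGoodσ, Finset.mem_powersetCard_univ.mpr hCk⟩
    · rw [hf]
      dsimp only
      rw [dif_pos hCk, piPerm_congr himg (him σ₀) (him τ) C hCk]
      ext x
      simp [hσ₀, hπ]
  have hle := Finset.card_le_card_of_surjOn f hsurj
  rw [Finset.card_univ, Fintype.card_equiv (Fintype.equivFinOfCardEq hn), hn,
    Finset.card_product, Finset.card_powersetCard, Finset.card_univ, Fintype.card_fin] at hle
  exact hle

end count

theorem stmt_7 {V : Type*} [Fintype V] [DecidableEq V] (n k ℓ : ℕ)
    (hn : Fintype.card V = n) (hkl : k + ℓ ≤ n)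
    (H : Finset (Finset V)) (huniform : ∀ e ∈ H, e.card = k)
    (hfree : ∀ S : Finset V, S.card = k + ℓ → ¬ ∀ f ⊆ S, f.card = k → f ∈ H)
    (hsat : ∀ e : Finset V, e.card = k → e ∉ H →
      ∃ S : Finset V, S.card = k + ℓ ∧ ∀ f ⊆ S, f.card = k → f ∈ insert e H) :
    n.choose k - (n - ℓ).choose k ≤ H.card := by
  classical
  set K := powersetCard k (univ : Finset V) with hK
  have hHK : H ⊆ K := fun e he => Finset.mem_powersetCard_univ.mpr (huniform e he)
  set N := K \ H with hN
  have hNcardk : ∀ e ∈ N, e.card = k := fun e he =>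
    Finset.mem_powersetCard_univ.mp (Finset.mem_sdiff.mp he).1
  have hNnot : ∀ e ∈ N, e ∉ H := fun e he => (Finset.mem_sdiff.mp he).2
  have hchoice : ∀ e ∈ N, ∃ Se : Finset V, Se.card = k + ℓ ∧
      ∀ f ⊆ Se, f.card = k → f ∈ insert e H :=
    fun e he => hsat e (hNcardk e he) (hNnot e he)
  choose! S hS1 hS2 using hchoice
  have hsub : ∀ e ∈ N, e ⊆ S e := by
    intro e he
    by_contra h
    apply hfree (S e) (hS1 e he)
    intro f hf hfk
    rcases Finset.mem_insert.mp (hS2 e he f hf hfk) with h1 | h1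
    · exact absurd (h1 ▸ hf) h
    · exact h1
  have hcross : ∀ e ∈ N, ∀ f ∈ N, f ⊆ S e → f = e := by
    intro e he f hf hfs
    rcases Finset.mem_insert.mp (hS2 e he f hfs (hNcardk f hf)) with h1 | h1
    · exact h1
    · exact absurd h1 (hNnot f hf)
  set Good : Finset V → Finset (V ≃ Fin n) := fun e =>
    univ.filter (fun σ => ∀ x ∈ e, ∀ y ∈ (S e)ᶜ, σ x < σ y) with hGood
  have hdisj : ∀ e ∈ N, ∀ f ∈ N, e ≠ f → Disjoint (Good e) (Good f) := by
    intro e he f hf hef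
    rw [Finset.disjoint_left]
    intro σ hσe hσf
    obtain ⟨x, hxf, hxs⟩ := Finset.not_subset.mp (fun h => hef ((hcross e he f hf h).symm))
    obtain ⟨y, hye, hys⟩ := Finset.not_subset.mp (fun h => hef (hcross f hf e he h))
    rw [hGood] at hσe hσf
    simp only [Finset.mem_filter] at hσe hσf
    have h1 := hσe.2 y hye x (Finset.mem_compl.mpr hxs)
    have h2 := hσf.2 x hxf y (Finset.mem_compl.mpr hys)
    exact absurd (h1.trans h2) (lt_irrefl _)
  have hcount : ∀ e ∈ N, Nat.factorial n ≤ (Good e).card * (n - ℓ).choose k := by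
    intro e he
    have hd : Disjoint e ((S e)ᶜ) := (disjoint_compl_right : Disjoint (S e) ((S e)ᶜ)).mono_left (hsub e he)
    have hU : (e ∪ (S e)ᶜ).card = n - ℓ := by
      rw [Finset.card_union_of_disjoint hd, Finset.card_compl, hS1 e he, hn, hNcardk e he]
      omega
    exact good_count hn e ((S e)ᶜ) hd (hNcardk e he) hU
  have hfact : (N.biUnion Good).card ≤ Nat.factorial n := by
    calc (N.biUnion Good).card ≤ (univ : Finset (V ≃ Fin n)).card := Finset.card_le_univ _
      _ = Nat.factorial n := by
          rw [Finset.card_univ, Fintype.card_equiv (Fintype.equivFinOfCardEq hn), hn]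
  have hsum : N.card * Nat.factorial n ≤ Nat.factorial n * (n - ℓ).choose k := by
    calc N.card * Nat.factorial n = ∑ _e ∈ N, Nat.factorial n := by
          rw [Finset.sum_const, smul_eq_mul]
      _ ≤ ∑ e ∈ N, (Good e).card * (n - ℓ).choose k := Finset.sum_le_sum hcount
      _ = (∑ e ∈ N, (Good e).card) * (n - ℓ).choose k := by rw [Finset.sum_mul]
      _ ≤ Nat.factorial n * (n - ℓ).choose k := by
          apply Nat.mul_le_mul_right
          rw [← Finset.card_biUnion hdisj]
          exact hfact
  have hNle : N.card ≤ (n - ℓ).choose k := by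
    have hsum' : N.card * Nat.factorial n ≤ (n - ℓ).choose k * Nat.factorial n := by
      rw [mul_comm ((n - ℓ).choose k)]
      exact hsum
    exact Nat.le_of_mul_le_mul_right hsum' (Nat.factorial_pos n)
  have hNcard : N.card = n.choose k - H.card := by
    rw [hN, Finset.card_sdiff_of_subset hHK, hK, Finset.card_powersetCard, Finset.card_univ, hn]
  have hHle : H.card ≤ n.choose k := by
    calc H.card ≤ K.card := Finset.card_le_card hHK
      _ = n.choose k := by rw [hK, Finset.card_powersetCard, Finset.card_univ, hn]
  omega
end

section
/- The hypergraph M(n,k,ℓ), whose edges are all k-subsets of {1,…,n} meeting {1,…,ℓ}, has exactly C(n,k) − C(n−ℓ,k) edges, contains no copy of K_{k+ℓ}^k, and the addition of any k-set not meeting {1,…,ℓ} creates a copy of K_{k+ℓ}^k. -/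
theorem stmt_8 (n k ℓ : ℕ) (hkl : k + ℓ ≤ n)
    (M : Finset (Finset (Fin n)))
    (hM : M = (Finset.univ.powersetCard k).filter
      (fun e : Finset (Fin n) => ∃ i ∈ e, (i : ℕ) < ℓ)) :
    M.card = n.choose k - (n - ℓ).choose k ∧
    (∀ S : Finset (Fin n), S.card = k + ℓ → ¬ ∀ f ⊆ S, f.card = k → f ∈ M) ∧
    (∀ e : Finset (Fin n), e.card = k → (∀ i ∈ e, ℓ ≤ (i : ℕ)) →
      ∃ S : Finset (Fin n), S.card = k + ℓ ∧ e ⊆ S ∧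
        ∀ f ⊆ S, f.card = k → f ∈ insert e M) := by
  classical
  have hℓn : ℓ ≤ n := le_trans (Nat.le_add_left _ _) hkl
  set L : Finset (Fin n) := Finset.univ.filter (fun i : Fin n => (i : ℕ) < ℓ) with hL
  have hLcard : L.card = ℓ := by
    have := Fintype.card_fin_lt_of_le (n := n) (m := ℓ) hℓn
    rw [Fintype.card_subtype] at this
    simpa [hL] using this
  refine ⟨?_, ?_, ?_⟩
  · -- cardinality
    subst hM
    have hneg : (Finset.univ.powersetCard k).filter
        (fun e : Finset (Fin n) => ¬ ∃ i ∈ e, (i : ℕ) < ℓ) = Lᶜ.powersetCard k := by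
      ext e
      simp only [Finset.mem_filter, Finset.mem_powersetCard, Finset.subset_iff,
        Finset.mem_compl, hL, Finset.mem_filter, Finset.mem_univ, true_and, not_exists,
        not_and, not_lt]
      tauto
    have htot := Finset.card_filter_add_card_filter_not
      (s := Finset.univ.powersetCard k)
      (p := fun e : Finset (Fin n) => ∃ i ∈ e, (i : ℕ) < ℓ)
    rw [hneg] at htot
    have h1 : (Finset.univ.powersetCard k (α := Fin n)).card = n.choose k := by
      simp [Finset.card_powersetCard]
    have h2 : (Lᶜ.powersetCard k).card = (n - ℓ).choose k := by
      rw [Finset.card_powersetCard, Finset.card_compl, hLcard, Fintype.card_fin]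
    omega
  · -- no K_{k+ℓ}^k
    intro S hS hall
    have hsplit : (S.filter (fun i : Fin n => (i : ℕ) < ℓ)).card
        + (S.filter (fun i : Fin n => ¬ (i : ℕ) < ℓ)).card = k + ℓ := by
      rw [Finset.card_filter_add_card_filter_not, hS]
    have hle : (S.filter (fun i : Fin n => (i : ℕ) < ℓ)).card ≤ ℓ := by
      calc (S.filter (fun i : Fin n => (i : ℕ) < ℓ)).card ≤ L.card :=
            Finset.card_le_card (by intro x hx; simp [hL]; exact (Finset.mem_filter.1 hx).2)
        _ = ℓ := hLcard
    have hk : k ≤ (S.filter (fun i : Fin n => ¬ (i : ℕ) < ℓ)).card := by omega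
    obtain ⟨f, hfsub, hfcard⟩ := Finset.exists_subset_card_eq hk
    have hfS : f ⊆ S := hfsub.trans (Finset.filter_subset _ _)
    have := hall f hfS hfcard
    rw [hM, Finset.mem_filter] at this
    obtain ⟨-, i, hi, hiℓ⟩ := this
    have := (Finset.mem_filter.1 (hfsub hi)).2
    exact this hiℓ
  · -- saturation
    intro e hek hemin
    have hdisj : Disjoint e L := by
      rw [Finset.disjoint_left]
      intro i hi hiL
      have := hemin i hi
      have := (Finset.mem_filter.1 hiL).2
      omega
    refine ⟨e ∪ L, ?_, Finset.subset_union_left, ?_⟩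
    · rw [Finset.card_union_of_disjoint hdisj, hek, hLcard]
    · intro f hf hfk
      by_cases hcase : ∃ i ∈ f, (i : ℕ) < ℓ
      · refine Finset.mem_insert_of_mem ?_
        rw [hM, Finset.mem_filter, Finset.mem_powersetCard]
        exact ⟨⟨Finset.subset_univ f, hfk⟩, hcase⟩
      · push_neg at hcase
        have hfe : f ⊆ e := by
          intro i hi
          rcases Finset.mem_union.1 (hf hi) with h | h
          · exact h
          · exact absurd ((Finset.mem_filter.1 h).2) (not_lt.2 (hcase i hi))
        have : f = e := Finset.eq_of_subset_of_card_le hfe (by omega)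
        simp [this]
end

section
/- Let r ≥ 3 and let H be a friendship r-hypergraph on n ≥ r+1 vertices with K_{r+1}^r-decomposition H'. Then |E(H')| ≥ (1/r)·C(n−1, r−1), and consequently |E(H)| ≥ ((r+1)/r)·C(n−1, r−1). -/
open Finset

theorem stmt_9 {V : Type*} [Fintype V] [DecidableEq V] (r n : ℕ) (hr : 3 ≤ r)
    (hn : Fintype.card V = n) (hnr : r + 1 ≤ n)
    (H : Finset (Finset V)) (huniform : ∀ e ∈ H, e.card = r)
    (hfriend : ∀ R : Finset V, R.card = r →
      ∃! x : V, x ∉ R ∧ ∀ A ⊆ R, A.card = r - 1 → insert x A ∈ H)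
    (H' : Finset (Finset V))
    (hH' : H' = Finset.univ.powerset.filter (fun S : Finset V => S.card = r + 1 ∧
      ∀ f ∈ S.powerset, f.card = r → f ∈ H)) :
    (n - 1).choose (r - 1) ≤ r * H'.card ∧
    (r + 1) * (n - 1).choose (r - 1) ≤ r * H.card := by
  classical
  subst hn
  obtain ⟨m, rfl⟩ : ∃ m, r = m + 1 := ⟨r - 1, by omega⟩
  simp only [Nat.add_sub_cancel] at hfriend ⊢
  -- a base vertex
  have hV : 0 < Fintype.card V := by omega
  obtain ⟨v⟩ := Fintype.card_pos_iff.mp hV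
  -- the (total) friend function
  set fr : Finset V → V := fun R => if h : R.card = m + 1 then (hfriend R h).choose else v
    with hfrdef
  have hfr1 : ∀ R : Finset V, R.card = m + 1 → fr R ∉ R := by
    intro R h
    simp only [hfrdef, dif_pos h]
    exact (hfriend R h).choose_spec.1.1
  have hfr2 : ∀ R : Finset V, R.card = m + 1 → ∀ A ⊆ R, A.card = m → insert (fr R) A ∈ H := by
    intro R h
    simp only [hfrdef, dif_pos h]
    exact (hfriend R h).choose_spec.1.2
  have hfr3 : ∀ R : Finset V, R.card = m + 1 → ∀ y, y ∉ R →
      (∀ A ⊆ R, A.card = m → insert y A ∈ H) → y = fr R := by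
    intro R h y h1 h2
    simp only [hfrdef, dif_pos h]
    exact (hfriend R h).choose_spec.2 y ⟨h1, h2⟩
  have hH'mem : ∀ S : Finset V, S ∈ H' ↔
      S.card = m + 2 ∧ ∀ f ⊆ S, f.card = m + 1 → f ∈ H := by
    intro S
    rw [hH', Finset.mem_filter]
    simp only [Finset.mem_powerset, Finset.subset_univ, true_and]
  -- every edge lies in a block
  have hedge_block : ∀ e ∈ H, insert (fr e) e ∈ H' := by
    intro e he
    have hec : e.card = m + 1 := huniform e he
    have hni : fr e ∉ e := hfr1 e hec
    rw [hH'mem]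
    constructor
    · rw [Finset.card_insert_of_notMem hni, hec]
    · intro f hf hfc
      by_cases hmem : fr e ∈ f
      · have hsub : f.erase (fr e) ⊆ e := by
          intro a ha
          have h2 := hf (Finset.mem_of_mem_erase ha)
          rcases Finset.mem_insert.mp h2 with h1 | h1
          · exact absurd h1 (Finset.ne_of_mem_erase ha)
          · exact h1
        have hc2 : (f.erase (fr e)).card = m := by
          rw [Finset.card_erase_of_mem hmem, hfc]
          omega
        have h3 := hfr2 e hec _ hsub hc2
        rwa [Finset.insert_erase hmem] at h3
      · have hsub : f ⊆ e := (Finset.subset_insert_iff_of_notMem hmem).mp hf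
        have heq : f = e := Finset.eq_of_subset_of_card_le hsub (by rw [hfc, hec])
        rwa [heq]
  -- blocks containing an edge are unique
  have hblock_unique : ∀ e ∈ H, ∀ S ∈ H', e ⊆ S → S = insert (fr e) e := by
    intro e he S hS heS
    have hec : e.card = m + 1 := huniform e he
    rw [hH'mem] at hS
    obtain ⟨hScard, hSsub⟩ := hS
    have hd : (S \ e).card = 1 := by
      rw [Finset.card_sdiff_of_subset heS, hScard, hec]
      omega
    obtain ⟨w, hw⟩ := Finset.card_eq_one.mp hd
    have hwS : w ∈ S \ e := hw ▸ Finset.mem_singleton_self w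
    have hwne : w ∉ e := (Finset.mem_sdiff.mp hwS).2
    have hSw : S = insert w e := by
      apply Finset.Subset.antisymm
      · intro a ha
        by_cases hae : a ∈ e
        · exact Finset.mem_insert_of_mem hae
        · have h4 : a ∈ S \ e := Finset.mem_sdiff.mpr ⟨ha, hae⟩
          rw [hw] at h4
          exact Finset.mem_insert.mpr (Or.inl (Finset.mem_singleton.mp h4))
      · intro a ha
        rcases Finset.mem_insert.mp ha with h1 | h1
        · exact h1 ▸ (Finset.mem_sdiff.mp hwS).1
        · exact heS h1
    have hwfr : w = fr e := by
      apply hfr3 e hec w hwne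
      intro A hA hAc
      apply hSsub
      · rw [hSw]
        exact Finset.insert_subset_insert w hA
      · rw [Finset.card_insert_of_notMem (fun hmem => hwne (hA hmem)), hAc]
    rw [hSw, hwfr]
  -- part 2 : (r+1) * |H'| ≤ |H|
  have hpart2 : (m + 2) * H'.card ≤ H.card := by
    have hdisj : ∀ S ∈ H', ∀ T ∈ H', S ≠ T →
        Disjoint (S.powersetCard (m + 1)) (T.powersetCard (m + 1)) := by
      intro S hS T hT hne
      rw [Finset.disjoint_left]
      intro e heS heT
      rw [Finset.mem_powersetCard] at heS heT
      have heH : e ∈ H := ((hH'mem S).mp hS).2 e heS.1 heS.2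
      exact hne ((hblock_unique e heH S hS heS.1).trans
        (hblock_unique e heH T hT heT.1).symm)
    have hsum : (H'.biUnion fun S => S.powersetCard (m + 1)).card
        = ∑ S ∈ H', (S.powersetCard (m + 1)).card := Finset.card_biUnion hdisj
    have hsub : (H'.biUnion fun S => S.powersetCard (m + 1)) ⊆ H := by
      intro e he
      rw [Finset.mem_biUnion] at he
      obtain ⟨S, hS, heS⟩ := he
      rw [Finset.mem_powersetCard] at heS
      exact ((hH'mem S).mp hS).2 e heS.1 heS.2
    have hle := Finset.card_le_card hsub
    rw [hsum] at hle
    have he1 : ∑ S ∈ H', (S.powersetCard (m + 1)).card = ∑ _S ∈ H', (m + 2) :=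
      Finset.sum_congr rfl (fun S hS => by
        rw [Finset.card_powersetCard, ((hH'mem S).mp hS).1, Nat.choose_succ_self_right])
    rw [he1, Finset.sum_const, smul_eq_mul, mul_comm] at hle
    exact hle
  -- part 1 setup
  set 𝒜 : Finset (Finset V) := (Finset.univ.erase v).powersetCard m with h𝒜
  have hAcard : 𝒜.card = (Fintype.card V - 1).choose m := by
    rw [h𝒜, Finset.card_powersetCard, Finset.card_erase_of_mem (Finset.mem_univ v),
      Finset.card_univ]
  set xf : Finset V → V := fun A => fr (insert v A) with hxf
  set ef : Finset V → Finset V := fun A => insert (xf A) A with hef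
  set fb : Finset V → Finset V := fun A => insert (fr (ef A)) (ef A) with hfb
  have hmem𝒜 : ∀ A ∈ 𝒜, v ∉ A ∧ A.card = m := by
    intro A hA
    rw [h𝒜, Finset.mem_powersetCard] at hA
    exact ⟨fun hv => (Finset.mem_erase.mp (hA.1 hv)).1 rfl, hA.2⟩
  have hRcard : ∀ A ∈ 𝒜, (insert v A).card = m + 1 := by
    intro A hA
    rw [Finset.card_insert_of_notMem (hmem𝒜 A hA).1, (hmem𝒜 A hA).2]
  have hxA : ∀ A ∈ 𝒜, xf A ∉ A ∧ xf A ≠ v := by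
    intro A hA
    have h1 : xf A ∉ insert v A := hfr1 _ (hRcard A hA)
    constructor
    · exact fun h => h1 (Finset.mem_insert_of_mem h)
    · exact fun h => h1 (h ▸ Finset.mem_insert_self v A)
  have hefH : ∀ A ∈ 𝒜, ef A ∈ H := by
    intro A hA
    exact hfr2 _ (hRcard A hA) A (Finset.subset_insert v A) (hmem𝒜 A hA).2
  have hefcard : ∀ A ∈ 𝒜, (ef A).card = m + 1 := by
    intro A hA
    rw [hef]
    rw [Finset.card_insert_of_notMem (hxA A hA).1, (hmem𝒜 A hA).2]
  have hmaps : ∀ A ∈ 𝒜, fb A ∈ H' := by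
    intro A hA
    exact hedge_block _ (hefH A hA)
  have hfiber : ∀ S ∈ H', (𝒜.filter fun A => fb A = S).card ≤ m + 1 := by
    intro S hS
    obtain ⟨hScard, hSsub⟩ := (hH'mem S).mp hS
    have hsubS : ∀ A ∈ 𝒜, fb A = S → A ⊆ S ∧ ef A ⊆ S ∧ xf A ∈ S := by
      intro A hA hfA
      have h1 : ef A ⊆ S := hfA ▸ Finset.subset_insert _ _
      exact ⟨(Finset.subset_insert _ _).trans h1, h1, h1 (Finset.mem_insert_self _ _)⟩
    by_cases hvS : v ∈ S
    · -- easy case : all A in the fiber are subsets of S.erase v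
      have hsub : (𝒜.filter fun A => fb A = S) ⊆ (S.erase v).powersetCard m := by
        intro A hA
        rw [Finset.mem_filter] at hA
        rw [Finset.mem_powersetCard]
        refine ⟨fun a ha => Finset.mem_erase.mpr ⟨?_, (hsubS A hA.1 hA.2).1 ha⟩, (hmem𝒜 A hA.1).2⟩
        exact fun h => (hmem𝒜 A hA.1).1 (h ▸ ha)
      have hle := Finset.card_le_card hsub
      rwa [Finset.card_powersetCard, Finset.card_erase_of_mem hvS, hScard,
        show m + 2 - 1 = m + 1 from rfl, Nat.choose_succ_self_right] at hle
    · -- hard case : v ∉ S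
      set g : Finset V → V := fun A => if h : (S \ ef A).Nonempty then h.choose else v with hg
      have hgA : ∀ A ∈ 𝒜, fb A = S → S \ ef A = {g A} := by
        intro A hA hfA
        have h1 : (S \ ef A).card = 1 := by
          rw [Finset.card_sdiff_of_subset (hsubS A hA hfA).2.1, hScard, hefcard A hA]
          omega
        obtain ⟨w, hw⟩ := Finset.card_eq_one.mp h1
        have hne : (S \ ef A).Nonempty := by
          rw [hw]; exact Finset.singleton_nonempty w
        have hgmem : g A ∈ S \ ef A := by
          show (if h : (S \ ef A).Nonempty then h.choose else v) ∈ S \ ef A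
          rw [dif_pos hne]
          exact hne.choose_spec
        rw [hw] at hgmem ⊢
        rw [Finset.mem_singleton] at hgmem
        rw [hgmem]
      have hgS : ∀ A ∈ 𝒜, fb A = S → g A ∈ S ∧ g A ∉ ef A := by
        intro A hA hfA
        have h1 : g A ∈ S \ ef A := (hgA A hA hfA) ▸ Finset.mem_singleton_self _
        exact ⟨(Finset.mem_sdiff.mp h1).1, (Finset.mem_sdiff.mp h1).2⟩
      have hefS : ∀ A ∈ 𝒜, fb A = S → ef A = S.erase (g A) := by
        intro A hA hfA
        have h1 : S.erase (g A) = ef A := by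
          rw [Finset.erase_eq, ← hgA A hA hfA, Finset.sdiff_sdiff_eq_self (hsubS A hA hfA).2.1]
        exact h1.symm
      have hSeq : ∀ A ∈ 𝒜, fb A = S → S = insert (g A) (insert (xf A) A) := by
        intro A hA hfA
        rw [show insert (xf A) A = ef A from rfl, hefS A hA hfA,
          Finset.insert_erase (hgS A hA hfA).1]
      have hArec : ∀ A ∈ 𝒜, fb A = S → A = (S.erase (g A)).erase (xf A) := by
        intro A hA hfA
        rw [← hefS A hA hfA]
        exact (Finset.erase_insert (hxA A hA).1).symm
      have hkey : ∀ A ∈ 𝒜, fb A = S → ∀ d ∈ S, d ≠ g A → d ≠ xf A →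
          insert v (S \ {g A, d}) ∈ H := by
        intro A hA hfA d hdS hd1 hd2
        have hdA : d ∈ A := by
          have h1 : d ∈ insert (g A) (insert (xf A) A) := hSeq A hA hfA ▸ hdS
          rcases Finset.mem_insert.mp h1 with h | h
          · exact absurd h hd1
          rcases Finset.mem_insert.mp h with h' | h'
          · exact absurd h' hd2
          exact h'
        have hvd : v ∉ A.erase d := fun h => (hmem𝒜 A hA).1 (Finset.mem_of_mem_erase h)
        have hBsub : insert v (A.erase d) ⊆ insert v A :=
          Finset.insert_subset_insert v (Finset.erase_subset d A)
        have hBcard : (insert v (A.erase d)).card = m := by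
          rw [Finset.card_insert_of_notMem hvd, Finset.card_erase_of_mem hdA, (hmem𝒜 A hA).2]
          omega
        have h2 : insert (xf A) (insert v (A.erase d)) ∈ H :=
          hfr2 _ (hRcard A hA) _ hBsub hBcard
        have h3 : S \ {g A, d} = insert (xf A) (A.erase d) := by
          rw [hSeq A hA hfA]
          ext a
          simp only [Finset.mem_sdiff, Finset.mem_insert, Finset.mem_erase, Finset.mem_singleton]
          constructor
          · rintro ⟨h4, h5⟩
            push_neg at h5
            rcases h4 with h | h | h
            · exact absurd h h5.1
            · exact Or.inl h
            · exact Or.inr ⟨h5.2, h⟩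
          · rintro (h | ⟨h4, h5⟩)
            · refine ⟨Or.inr (Or.inl h), ?_⟩
              push_neg
              constructor
              · intro hc
                exact (hgS A hA hfA).2 ((hc.symm.trans h) ▸ Finset.mem_insert_self (xf A) A)
              · intro hc
                exact hd2 (hc.symm.trans h)
            · refine ⟨Or.inr (Or.inr h5), ?_⟩
              push_neg
              exact ⟨fun hc => (hgS A hA hfA).2 (hc ▸ Finset.mem_insert_of_mem h5), h4⟩
        have heq : insert (xf A) (insert v (A.erase d)) = insert v (S \ {g A, d}) := by
          rw [h3, Finset.insert_comm]
        rwa [heq] at h2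
      have hnofull : ∀ y ∈ S, (∀ d ∈ S.erase y, insert v (S \ {y, d}) ∈ H) → False := by
        intro y hyS hfull
        have hcardSy : (S.erase y).card = m + 1 := by
          rw [Finset.card_erase_of_mem hyS, hScard]
          omega
        have hy : y = fr (S.erase y) := by
          apply hfr3 _ hcardSy y (Finset.notMem_erase y S)
          intro B hB hBc
          apply hSsub
          · exact Finset.insert_subset_iff.mpr ⟨hyS, hB.trans (Finset.erase_subset y S)⟩
          · rw [Finset.card_insert_of_notMem (fun h => Finset.notMem_erase y S (hB h)), hBc]
        have hv' : v = fr (S.erase y) := by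
          apply hfr3 _ hcardSy v (fun h => hvS (Finset.erase_subset y S h))
          intro B hB hBc
          have h1 : ((S.erase y) \ B).card = 1 := by
            rw [Finset.card_sdiff_of_subset hB, hcardSy, hBc]
            omega
          obtain ⟨d, hd⟩ := Finset.card_eq_one.mp h1
          have hdm : d ∈ S.erase y := (Finset.mem_sdiff.mp (hd ▸ Finset.mem_singleton_self d)).1
          have hBeq : B = S \ {y, d} := by
            have h2 : B = (S.erase y) \ {d} := by
              rw [← hd, Finset.sdiff_sdiff_eq_self hB]
            rw [h2]
            ext a
            simp only [Finset.mem_sdiff, Finset.mem_erase, Finset.mem_singleton, Finset.mem_insert]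
            tauto
          rw [hBeq]
          exact hfull d hdm
        have hyv : y = v := hy.trans hv'.symm
        exact hvS (hyv ▸ hyS)
      set T := 𝒜.filter fun A => fb A = S with hT
      have hTmem : ∀ A ∈ T, A ∈ 𝒜 ∧ fb A = S := fun A hA => Finset.mem_filter.mp hA
      show T.card ≤ m + 1
      by_contra hcon
      push_neg at hcon
      have hinj : Set.InjOn g T := by
        intro A hA A' hA' hgg
        rw [Finset.mem_coe] at hA hA'
        obtain ⟨hA𝒜, hfA⟩ := hTmem A hA
        obtain ⟨hA'𝒜, hfA'⟩ := hTmem A' hA'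
        by_contra hne
        have hxne : xf A ≠ xf A' := by
          intro hxx
          apply hne
          rw [hArec A hA𝒜 hfA, hArec A' hA'𝒜 hfA', hgg, hxx]
        apply hnofull (g A) (hgS A hA𝒜 hfA).1
        intro d hd
        have hdS : d ∈ S := Finset.mem_of_mem_erase hd
        have hdy : d ≠ g A := Finset.ne_of_mem_erase hd
        by_cases hdx : d = xf A
        · have h1 := hkey A' hA'𝒜 hfA' d hdS (by rw [← hgg]; exact hdy)
            (fun h => hxne (hdx.symm.trans h))
          rwa [← hgg] at h1
        · exact hkey A hA𝒜 hfA d hdS hdy hdx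
      have himg : T.image g ⊆ S := by
        intro y hy
        obtain ⟨A, hA, rfl⟩ := Finset.mem_image.mp hy
        exact (hgS A (hTmem A hA).1 (hTmem A hA).2).1
      have hc1 : (T.image g).card = T.card := Finset.card_image_of_injOn hinj
      have hc2 : T.image g = S := Finset.eq_of_subset_of_card_le himg (by
        rw [hc1, hScard]; omega)
      obtain ⟨A₀, hA₀⟩ : T.Nonempty := Finset.card_pos.mp (by omega)
      obtain ⟨hA₀𝒜, hfA₀⟩ := hTmem A₀ hA₀
      have hx₀S : xf A₀ ∈ T.image g := by
        rw [hc2]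
        exact (hsubS A₀ hA₀𝒜 hfA₀).2.2
      obtain ⟨A₁, hA₁, hgA₁⟩ := Finset.mem_image.mp hx₀S
      obtain ⟨hA₁𝒜, hfA₁⟩ := hTmem A₁ hA₁
      have hgxne : g A₀ ≠ xf A₀ :=
        fun h => (hgS A₀ hA₀𝒜 hfA₀).2 (h ▸ Finset.mem_insert_self (xf A₀) A₀)
      by_cases hcase : xf A₁ = g A₀
      · have hAeq : A₁ = A₀ := by
          rw [hArec A₁ hA₁𝒜 hfA₁, hArec A₀ hA₀𝒜 hfA₀, hgA₁, hcase]
          ext a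
          simp only [Finset.mem_erase]
          tauto
        exact hgxne (hcase.symm.trans (congrArg xf hAeq))
      · apply hnofull (g A₀) (hgS A₀ hA₀𝒜 hfA₀).1
        intro d hd
        have hdS : d ∈ S := Finset.mem_of_mem_erase hd
        have hdy : d ≠ g A₀ := Finset.ne_of_mem_erase hd
        by_cases hdx : d = xf A₀
        · have h1 := hkey A₁ hA₁𝒜 hfA₁ (g A₀) (hgS A₀ hA₀𝒜 hfA₀).1
            (fun h => hgxne (h.trans hgA₁))
            (fun h => hcase h.symm)
          rwa [Finset.pair_comm, hgA₁, ← hdx] at h1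
        · exact hkey A₀ hA₀𝒜 hfA₀ d hdS hdy hdx
  have hpart1 : (Fintype.card V - 1).choose m ≤ (m + 1) * H'.card := by
    rw [← hAcard]
    exact Finset.card_le_mul_card_image_of_maps_to hmaps (m + 1) hfiber
  refine ⟨hpart1, ?_⟩
  calc (m + 1 + 1) * (Fintype.card V - 1).choose m
      ≤ (m + 2) * ((m + 1) * H'.card) := Nat.mul_le_mul_left _ hpart1
    _ = (m + 1) * ((m + 2) * H'.card) := by ring
    _ ≤ (m + 1) * H.card := Nat.mul_le_mul_left _ hpart2
end

section
/- If S is an S(r−1, r, n−1) Steiner system, then the universal hypergraph U_r(S), obtained by adding a new vertex u, all edges of S, and all r-sets consisting of u and an (r−1)-subset of V(S), is a friendship r-hypergraph on n vertices. -/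
theorem stmt_11 {V : Type*} [Fintype V] [DecidableEq V] (r n : ℕ) (hr : 2 ≤ r)
    (hn : Fintype.card V = n) (hnr : r ≤ n - 1)
    (u : V) (S : Finset (Finset V))
    (huS : ∀ e ∈ S, u ∉ e) (huniform : ∀ e ∈ S, e.card = r)
    (hsteiner : ∀ B : Finset V, u ∉ B → B.card = r - 1 → ∃! e, e ∈ S ∧ B ⊆ e)
    (U : Finset (Finset V))
    (hU : U = S ∪ ((Finset.univ.erase u).powersetCard (r - 1)).image (insert u)) :
    ∀ R : Finset V, R.card = r →
      ∃! x : V, x ∉ R ∧ ∀ A ⊆ R, A.card = r - 1 → insert x A ∈ U := by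
  subst hU
  intro R hR
  -- membership helpers
  have hSmem : ∀ {e : Finset V},
      e ∈ S ∪ ((Finset.univ.erase u).powersetCard (r - 1)).image (insert u) →
      u ∉ e → e ∈ S := by
    intro e he hue
    rcases Finset.mem_union.mp he with h | h
    · exact h
    · obtain ⟨X, _, hX⟩ := Finset.mem_image.mp h
      exact absurd (hX ▸ Finset.mem_insert_self u X) hue
  have hImem : ∀ {X : Finset V}, u ∉ X → X.card = r - 1 →
      insert u X ∈ S ∪ ((Finset.univ.erase u).powersetCard (r - 1)).image (insert u) := by
    intro X huX hXc
    refine Finset.mem_union_right _ (Finset.mem_image.mpr ⟨X, ?_, rfl⟩)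
    refine Finset.mem_powersetCard.mpr ⟨?_, hXc⟩
    intro a ha
    exact Finset.mem_erase.mpr ⟨fun h => huX (h ▸ ha), Finset.mem_univ a⟩
  by_cases hu : u ∈ R
  · -- case u ∈ R
    set B := R.erase u with hB
    have hBcard : B.card = r - 1 := by rw [hB, Finset.card_erase_of_mem hu, hR]
    have huB : u ∉ B := Finset.notMem_erase u R
    obtain ⟨e, ⟨heS, hBe⟩, huniq⟩ := hsteiner B huB hBcard
    have hecard := huniform e heS
    have hss : B ⊂ e := HasSubset.Subset.ssubset_of_ne hBe
      (by intro h; rw [← h] at hecard; omega)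
    obtain ⟨x, hxe, hxB⟩ := Finset.exists_of_ssubset hss
    have hxu : x ≠ u := fun h => huS e heS (h ▸ hxe)
    have hexB : e = insert x B := by
      refine (Finset.eq_of_subset_of_card_le (Finset.insert_subset hxe hBe) ?_).symm
      rw [Finset.card_insert_of_notMem hxB, hBcard, hecard]; omega
    have hxR : x ∉ R := by
      intro hxR
      exact hxB (Finset.mem_erase.mpr ⟨hxu, hxR⟩)
    refine ⟨x, ⟨hxR, ?_⟩, ?_⟩
    · intro A hAR hAc
      by_cases hA : u ∈ A
      · have hxA : x ∉ A.erase u := fun h =>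
          hxB (Finset.mem_erase.mpr ⟨(Finset.mem_erase.mp h).1,
            hAR (Finset.mem_erase.mp h).2⟩)
        have : insert x A = insert u (insert x (A.erase u)) := by
          conv_lhs => rw [← Finset.insert_erase hA]
          rw [Finset.insert_comm]
        rw [this]
        refine hImem ?_ ?_
        · intro h
          rcases Finset.mem_insert.mp h with h | h
          · exact hxu h.symm
          · exact (Finset.mem_erase.mp h).1 rfl
        · rw [Finset.card_insert_of_notMem hxA, Finset.card_erase_of_mem hA, hAc]
          omega
      · have hAB : A = B := by
          refine Finset.eq_of_subset_of_card_le ?_ ?_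
          · exact fun a ha => Finset.mem_erase.mpr ⟨fun h => hA (h ▸ ha), hAR ha⟩
          · rw [hBcard, hAc]
        rw [hAB, ← hexB]
        exact Finset.mem_union_left _ heS
    · rintro y ⟨hyR, hy⟩
      have hyu : y ≠ u := fun h => hyR (h ▸ hu)
      have hyB : y ∉ B := fun h => hyR (Finset.mem_erase.mp h).2
      have h1 := hy B (Finset.erase_subset u R) hBcard
      have h2 : insert y B ∈ S := by
        refine hSmem h1 ?_
        intro h
        rcases Finset.mem_insert.mp h with h | h
        · exact hyu h.symm
        · exact huB h
      have h3 : insert y B = e := huniq _ ⟨h2, Finset.subset_insert y B⟩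
      rw [hexB] at h3
      have : y ∈ insert x B := h3 ▸ Finset.mem_insert_self y B
      rcases Finset.mem_insert.mp this with h | h
      · exact h
      · exact absurd h hyB
  · -- case u ∉ R : friend is u
    refine ⟨u, ⟨hu, ?_⟩, ?_⟩
    · intro A hAR hAc
      exact hImem (fun h => hu (hAR h)) hAc
    · rintro y ⟨hyR, hy⟩
      by_contra hyu
      obtain ⟨a, haR, b, hbR, hab⟩ := Finset.one_lt_card.mp (by omega : 1 < R.card)
      have hya : y ≠ a := fun h => hyR (h ▸ haR)
      have hyb : y ≠ b := fun h => hyR (h ▸ hbR)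
      have hmem : ∀ c ∈ R, insert y (R.erase c) ∈ S := by
        intro c hcR
        have hc : (R.erase c).card = r - 1 := by
          rw [Finset.card_erase_of_mem hcR, hR]
        have := hy (R.erase c) (Finset.erase_subset c R) hc
        refine hSmem this ?_
        intro h
        rcases Finset.mem_insert.mp h with h | h
        · exact hyu h.symm
        · exact hu (Finset.mem_erase.mp h).2
      have he1 := hmem a haR
      have he2 := hmem b hbR
      set B := insert y ((R.erase a).erase b) with hBdef
      have hbRa : b ∈ R.erase a := Finset.mem_erase.mpr ⟨hab.symm, hbR⟩
      have hyRab : y ∉ (R.erase a).erase b := fun h =>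
        hyR (Finset.mem_erase.mp (Finset.mem_erase.mp h).2).2
      have hBc : B.card = r - 1 := by
        rw [hBdef, Finset.card_insert_of_notMem hyRab,
          Finset.card_erase_of_mem hbRa, Finset.card_erase_of_mem haR, hR]
        omega
      have huB : u ∉ B := by
        intro h
        rcases Finset.mem_insert.mp h with h | h
        · exact hyu h.symm
        · exact hu (Finset.mem_erase.mp (Finset.mem_erase.mp h).2).2
      obtain ⟨e, _, huniq⟩ := hsteiner B huB hBc
      have hs1 : B ⊆ insert y (R.erase a) := by
        intro c hc
        rcases Finset.mem_insert.mp hc with h | h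
        · subst h; exact Finset.mem_insert_self _ _
        · exact Finset.mem_insert_of_mem (Finset.mem_erase.mp h).2
      have hs2 : B ⊆ insert y (R.erase b) := by
        intro c hc
        rcases Finset.mem_insert.mp hc with h | h
        · subst h; exact Finset.mem_insert_self _ _
        · exact Finset.mem_insert_of_mem
            (Finset.mem_erase.mpr ⟨(Finset.mem_erase.mp h).1,
              (Finset.mem_erase.mp (Finset.mem_erase.mp h).2).2⟩)
      have heq : insert y (R.erase a) = insert y (R.erase b) := by
        rw [huniq _ ⟨he1, hs1⟩, huniq _ ⟨he2, hs2⟩]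
      have : a ∈ insert y (R.erase a) := by
        rw [heq]
        exact Finset.mem_insert_of_mem (Finset.mem_erase.mpr ⟨hab, haR⟩)
      rcases Finset.mem_insert.mp this with h | h
      · exact hya h.symm
      · exact (Finset.mem_erase.mp h).1 rfl
end

section
/- Let r ≥ 3, let H' be the K_{r+1}^r-decomposition of a friendship r-hypergraph H, let q ∈ E(H') and z ∉ q. Then the number of edges q' ∈ E(H') with z ∈ q' and |q' ∩ q| = r−1 is at most ⌊(r+1)(3r−4)/6⌋. -/
/-!
Sending `q'` to the pair `q \ q'` is injective, because an `r`-set lies in at most one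
`(r+1)`-clique, and its image consists of good pairs `p ⊆ q`, those with `(q \ p) ∪ {z} ∈ H`.
The bad pairs form a graph on the `r + 1` vertices of `q`. Uniqueness of friends shows that it
has no isolated vertex `a` (otherwise both `a` and `z` are friends of `q \ {a}`) and no isolated
edge `{c, d}` (otherwise both `c` and `d` are friends of `(q \ {c, d}) ∪ {z}`). Such a graph has
at least `2(r+1)/3` edges, so at most `(r+1)r/2 - 2(r+1)/3` pairs are good.
-/

open Finset

theorem two_mul_card_le_three_mul_card_of_no_isolated {α : Type*} [DecidableEq α]
    {s : Finset α} {B : Finset (Finset α)} (hB : ∀ e ∈ B, e ⊆ s ∧ #e = 2)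
    (hcover : ∀ v ∈ s, ∃ e ∈ B, v ∈ e)
    (hmeet : ∀ e ∈ B, ∃ e' ∈ B, e' ≠ e ∧ (e ∩ e').Nonempty) :
    2 * #s ≤ 3 * #B := by
  set deg : α → ℕ := fun v => #{e ∈ B | v ∈ e}
  -- with degree-1 vertices counted twice, every vertex weighs at least 2 in total, while every
  -- edge has an endpoint of degree at least 2 and so carries weight at most 3
  set w : α → ℕ := fun v => if deg v = 1 then 2 else 1
  have hdouble : ∑ v ∈ s, ∑ e ∈ B with v ∈ e, w v = ∑ e ∈ B, ∑ v ∈ e, w v :=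
    Finset.sum_comm' fun v e => by
      simp only [mem_filter]
      exact ⟨fun h => ⟨h.2.2, h.2.1⟩, fun h => ⟨(hB e h.2).1 h.1, h.2, h.1⟩⟩
  have hvertex : ∀ v ∈ s, 2 ≤ ∑ e ∈ B with v ∈ e, w v := by
    intro v hv
    obtain ⟨e, he, hve⟩ := hcover v hv
    have hpos : 0 < deg v := card_pos.mpr ⟨e, mem_filter.mpr ⟨he, hve⟩⟩
    rw [sum_const, smul_eq_mul]
    change 2 ≤ deg v * w v
    by_cases h : deg v = 1 <;> simp only [w, h, if_true, if_false] <;> omega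
  have hedge : ∀ e ∈ B, ∑ v ∈ e, w v ≤ 3 := by
    intro e he
    obtain ⟨e', he', hne, v, hv⟩ := hmeet e he
    have hv_e := (mem_inter.mp hv).1
    have hdeg : 1 < deg v := one_lt_card.mpr
      ⟨e, mem_filter.mpr ⟨he, hv_e⟩, e', mem_filter.mpr ⟨he', (mem_inter.mp hv).2⟩,
        hne.symm⟩
    have hwv : w v = 1 := if_neg hdeg.ne'
    have hrest : ∑ u ∈ e.erase v, w u ≤ #(e.erase v) * 2 :=
      sum_le_card_nsmul _ _ _ fun u _ => by simp only [w]; split <;> omega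
    calc ∑ u ∈ e, w u = w v + ∑ u ∈ e.erase v, w u := (add_sum_erase _ _ hv_e).symm
      _ ≤ 1 + #(e.erase v) * 2 := by rw [hwv]; gcongr
      _ = 3 := by rw [card_erase_of_mem hv_e, (hB e he).2]
  calc 2 * #s = ∑ _v ∈ s, 2 := by rw [sum_const, smul_eq_mul, mul_comm]
    _ ≤ ∑ v ∈ s, ∑ e ∈ B with v ∈ e, w v := sum_le_sum hvertex
    _ = ∑ e ∈ B, ∑ v ∈ e, w v := hdouble
    _ ≤ ∑ _e ∈ B, 3 := sum_le_sum hedge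
    _ = 3 * #B := by rw [sum_const, smul_eq_mul, mul_comm]

namespace FriendshipHypergraph

variable {V : Type*} [DecidableEq V] {H : Finset (Finset V)} {r : ℕ}

def IsFriend (H : Finset (Finset V)) (r : ℕ) (R : Finset V) (x : V) : Prop :=
  x ∉ R ∧ ∀ A ⊆ R, #A = r - 1 → insert x A ∈ H

def HasUniqueFriends (H : Finset (Finset V)) (r : ℕ) : Prop :=
  ∀ R : Finset V, #R = r → {x | IsFriend H r R x}.Subsingleton

def IsClique (H : Finset (Finset V)) (r : ℕ) (S : Finset V) : Prop :=
  ∀ f ⊆ S, #f = r → f ∈ H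

theorem IsClique.isFriend {S R : Finset V} {x : V} (hS : IsClique H r S) (hr : 0 < r)
    (hx : x ∈ S) (hRS : R ⊆ S) (hxR : x ∉ R) : IsFriend H r R x :=
  ⟨hxR, fun A hAR hA => hS _ (insert_subset hx (hAR.trans hRS)) <| by
    rw [card_insert_of_notMem fun h => hxR (hAR h), hA]; omega⟩

theorem IsClique.eq_of_subset (hfriend : HasUniqueFriends H r) (hr : 0 < r)
    {Q₁ Q₂ R : Finset V} (hQ₁ : IsClique H r Q₁) (hQ₂ : IsClique H r Q₂)
    (hcard₁ : #Q₁ = r + 1) (hcard₂ : #Q₂ = r + 1) (hR : #R = r)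
    (hR₁ : R ⊆ Q₁) (hR₂ : R ⊆ Q₂) :
    Q₁ = Q₂ := by
  obtain ⟨x₁, hx₁R, rfl⟩ := exists_eq_insert_iff.mpr ⟨hR₁, by omega⟩
  obtain ⟨x₂, hx₂R, rfl⟩ := exists_eq_insert_iff.mpr ⟨hR₂, by omega⟩
  rw [hfriend R hR (hQ₁.isFriend hr (mem_insert_self _ _) (subset_insert _ _) hx₁R)
    (hQ₂.isFriend hr (mem_insert_self _ _) (subset_insert _ _) hx₂R)]

variable (H) in
def goodPairs (q : Finset V) (z : V) : Finset (Finset V) :=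
  {p ∈ q.powersetCard 2 | insert z (q \ p) ∈ H}

variable (H) in
def badPairs (q : Finset V) (z : V) : Finset (Finset V) :=
  {p ∈ q.powersetCard 2 | insert z (q \ p) ∉ H}

variable {q : Finset V} {z : V}

theorem card_goodPairs_add_card_badPairs :
    #(goodPairs H q z) + #(badPairs H q z) = (#q).choose 2 := by
  rw [goodPairs, badPairs, card_filter_add_card_filter_not, card_powersetCard]

theorem card_filter_le_card_goodPairs
    (hfriend : HasUniqueFriends H r) (hr : 0 < r)
    (hq : #q = r + 1) (hz : z ∉ q) (C : Finset (Finset V))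
    (hC : ∀ Q ∈ C, IsClique H r Q ∧ #Q = r + 1) :
    #{Q ∈ C | z ∈ Q ∧ #(Q ∩ q) = r - 1} ≤ #(goodPairs H q z) := by
  have hcore : ∀ Q : Finset V, #(Q ∩ q) = r - 1 → #(insert z (q ∩ Q)) = r := by
    intro Q hQq
    rw [card_insert_of_notMem fun h => hz (mem_inter.mp h).1, inter_comm, hQq]; omega
  refine card_le_card_of_injOn (fun Q => q \ Q) (fun Q hQ => ?_)
    (fun Q₁ hQ₁ Q₂ hQ₂ heq => ?_)
  · simp only [mem_coe, mem_filter] at hQ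
    obtain ⟨hQC, hzQ, hQq⟩ := hQ
    have hsd : #(q \ Q) = 2 := by
      rw [← card_sdiff_add_card_inter q Q, inter_comm, hQq] at hq; omega
    simp only [goodPairs, mem_coe, mem_filter, mem_powersetCard, sdiff_sdiff_self_left]
    exact ⟨⟨sdiff_subset, hsd⟩, (hC Q hQC).1 _ (insert_subset hzQ inter_subset_right)
      (hcore Q hQq)⟩
  · simp only [mem_coe, mem_filter] at hQ₁ hQ₂
    obtain ⟨hQ₁C, hzQ₁, hQ₁q⟩ := hQ₁
    obtain ⟨hQ₂C, hzQ₂, -⟩ := hQ₂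
    have hinter : q ∩ Q₁ = q ∩ Q₂ := by
      rw [← sdiff_sdiff_self_left, ← sdiff_sdiff_self_left q Q₂]; exact congrArg (q \ ·) heq
    exact IsClique.eq_of_subset hfriend hr (hC Q₁ hQ₁C).1 (hC Q₂ hQ₂C).1 (hC Q₁ hQ₁C).2
      (hC Q₂ hQ₂C).2 (hcore Q₁ hQ₁q) (insert_subset hzQ₁ inter_subset_right)
      (hinter ▸ insert_subset hzQ₂ inter_subset_right)

theorem insert_mem_of_sdiff_notMem_badPairs (hr : 0 < r) (hq : #q = r + 1) {A : Finset V}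
    (hAq : A ⊆ q) (hA : #A = r - 1) (hbad : q \ A ∉ badPairs H q z) : insert z A ∈ H := by
  have hpair : q \ A ∈ q.powersetCard 2 :=
    mem_powersetCard.mpr ⟨sdiff_subset, by rw [card_sdiff_of_subset hAq, hq, hA]; omega⟩
  by_contra hAH
  exact hbad (mem_filter.mpr ⟨hpair, by rwa [Finset.sdiff_sdiff_eq_self hAq]⟩)

theorem exists_mem_badPairs_of_mem
    (hfriend : HasUniqueFriends H r) (hr : 0 < r)
    (hq : #q = r + 1) (hqH : IsClique H r q) (hz : z ∉ q) {a : V} (ha : a ∈ q) :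
    ∃ p ∈ badPairs H q z, a ∈ p := by
  by_contra! hgood
  have hz_friend : IsFriend H r (q.erase a) z := by
    refine ⟨fun h => hz (mem_of_mem_erase h), fun A hA hAcard => ?_⟩
    refine insert_mem_of_sdiff_notMem_badPairs hr hq (hA.trans (erase_subset a q)) hAcard
      fun hbad => hgood _ hbad (mem_sdiff.mpr ⟨ha, fun h => notMem_erase a q (hA h)⟩)
  have ha_friend := hqH.isFriend hr ha (erase_subset a q) (notMem_erase a q)
  have hcard : #(q.erase a) = r := by rw [card_erase_of_mem ha, hq]; rfl
  exact hz (hfriend _ hcard hz_friend ha_friend ▸ ha)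

theorem IsClique.isFriend_insert_sdiff (hr : 0 < r) (hq : #q = r + 1) (hqH : IsClique H r q)
    (hz : z ∉ q) {p : Finset V} (hp : p ∈ q.powersetCard 2) {c : V} (hc : c ∈ p)
    (hgood : ∀ p' ∈ badPairs H q z, p' ≠ p → p ∩ p' = ∅) :
    IsFriend H r (insert z (q \ p)) c := by
  obtain ⟨hpq, hp2⟩ := mem_powersetCard.mp hp
  have hcq := hpq hc
  have hc_notMem : c ∉ insert z (q \ p) := by
    simp only [mem_insert, mem_sdiff, not_or, not_and, not_not]
    exact ⟨fun h => hz (h ▸ hcq), fun _ => hc⟩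
  refine ⟨hc_notMem, fun A hA hAcard => ?_⟩
  have hcA : c ∉ A := fun h => hc_notMem (hA h)
  by_cases hzA : z ∈ A
  · -- `insert c A` is `insert z B`, and the pair `q \ B` meets `p` in the other point of `p`
    set B := insert c (A.erase z)
    have hAq : A.erase z ⊆ q \ p := fun x hx =>
      (mem_insert.mp (hA (mem_of_mem_erase hx))).resolve_left (ne_of_mem_erase hx)
    have hBq : B ⊆ q := insert_subset hcq (hAq.trans sdiff_subset)
    have hB : #B = r - 1 := by
      have := card_pos.mpr ⟨z, hzA⟩
      rw [card_insert_of_notMem fun h => hcA (mem_of_mem_erase h), card_erase_of_mem hzA]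
      omega
    have hmeet : (p ∩ (q \ B)).Nonempty := by
      obtain ⟨d, hd⟩ := card_pos.mp
        (by rw [card_erase_of_mem hc, hp2]; omega : 0 < #(p.erase c))
      have hdp := mem_of_mem_erase hd
      refine ⟨d, mem_inter.mpr ⟨hdp, mem_sdiff.mpr ⟨hpq hdp, ?_⟩⟩⟩
      intro hdB
      rcases mem_insert.mp hdB with hdc | hdA
      · exact ne_of_mem_erase hd hdc
      · exact (mem_sdiff.mp (hAq hdA)).2 hdp
    have hne : q \ B ≠ p := fun h => (mem_sdiff.mp (h ▸ hc)).2 (mem_insert_self c _)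
    have hzB := insert_mem_of_sdiff_notMem_badPairs hr hq hBq hB fun hbad =>
      hmeet.ne_empty (hgood _ hbad hne)
    rwa [← insert_erase hzA, insert_comm]
  · refine hqH _ (insert_subset hcq fun x hx => ?_)
      (by rw [card_insert_of_notMem hcA, hAcard]; omega)
    exact (mem_sdiff.mp ((mem_insert.mp (hA hx)).resolve_left fun h => hzA (h ▸ hx))).1

theorem exists_mem_badPairs_inter_nonempty
    (hfriend : HasUniqueFriends H r) (hr : 0 < r)
    (hq : #q = r + 1) (hqH : IsClique H r q) (hz : z ∉ q) {p : Finset V}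
    (hp : p ∈ q.powersetCard 2) :
    ∃ p' ∈ badPairs H q z, p' ≠ p ∧ (p ∩ p').Nonempty := by
  by_contra! hgood
  obtain ⟨hpq, hp2⟩ := mem_powersetCard.mp hp
  obtain ⟨c, d, hcd, rfl⟩ := card_eq_two.mp hp2
  have hcard : #(insert z (q \ {c, d})) = r := by
    rw [card_insert_of_notMem fun h => hz (mem_sdiff.mp h).1, card_sdiff_of_subset hpq, hp2, hq]
    omega
  exact hcd <| hfriend _ hcard (hqH.isFriend_insert_sdiff hr hq hz hp (mem_insert_self c {d}) hgood)
    (hqH.isFriend_insert_sdiff hr hq hz hp (mem_insert_of_mem (mem_singleton_self d)) hgood)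

theorem two_mul_le_three_mul_card_badPairs
    (hfriend : HasUniqueFriends H r) (hr : 0 < r)
    (hq : #q = r + 1) (hqH : IsClique H r q) (hz : z ∉ q) :
    2 * (r + 1) ≤ 3 * #(badPairs H q z) := by
  have hpair : ∀ p ∈ badPairs H q z, p ∈ q.powersetCard 2 := fun p hp => (mem_filter.mp hp).1
  rw [← hq]
  exact two_mul_card_le_three_mul_card_of_no_isolated
    (fun p hp => mem_powersetCard.mp (hpair p hp))
    (fun a ha => exists_mem_badPairs_of_mem hfriend hr hq hqH hz ha)
    (fun p hp => exists_mem_badPairs_inter_nonempty hfriend hr hq hqH hz (hpair p hp))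

end FriendshipHypergraph

open FriendshipHypergraph

theorem stmt_14_general {V : Type*} [Fintype V] [DecidableEq V] (r : ℕ) (hr : 3 ≤ r)
    (H : Finset (Finset V))
    (hfriend : ∀ R : Finset V, R.card = r →
      ∃! x : V, x ∉ R ∧ ∀ A ⊆ R, A.card = r - 1 → insert x A ∈ H)
    (H' : Finset (Finset V))
    (hH' : H' = Finset.univ.powerset.filter (fun S : Finset V => S.card = r + 1 ∧
      ∀ f ∈ S.powerset, f.card = r → f ∈ H))
    (q : Finset V) (hq : q ∈ H') (z : V) (hz : z ∉ q) :
    (H'.filter (fun q' => z ∈ q' ∧ (q' ∩ q).card = r - 1)).card ≤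
      (r + 1) * (3 * r - 4) / 6 := by
  have hr0 : 0 < r := by omega
  have hunique : HasUniqueFriends H r :=
    fun R hR _ hx _ hy => (hfriend R hR).unique hx hy
  have hH'mem : ∀ Q ∈ H', IsClique H r Q ∧ #Q = r + 1 := fun Q hQ => by
    simp only [hH', mem_filter, mem_powerset] at hQ
    exact ⟨hQ.2.2, hQ.2.1⟩
  obtain ⟨hqH, hqcard⟩ := hH'mem q hq
  have hgood := card_filter_le_card_goodPairs hunique hr0 hqcard hz H' hH'mem
  have hbad := two_mul_le_three_mul_card_badPairs hunique hr0 hqcard hqH hz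
  have htotal : #(goodPairs H q z) + #(badPairs H q z) = (r + 1).choose 2 := by
    rw [card_goodPairs_add_card_badPairs, hqcard]
  have hchoose : (r + 1).choose 2 * 2 = (r + 1) * r := by
    simpa using (Nat.add_one_mul_choose_eq r 1).symm
  rw [Nat.le_div_iff_mul_le (by norm_num)]
  have h4 : 4 ≤ 3 * r := by omega
  zify [h4] at *
  nlinarith

theorem stmt_14 {V : Type*} [Fintype V] [DecidableEq V] (r : ℕ) (hr : 3 ≤ r)
    (H : Finset (Finset V)) (huniform : ∀ e ∈ H, e.card = r)
    (hfriend : ∀ R : Finset V, R.card = r →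
      ∃! x : V, x ∉ R ∧ ∀ A ⊆ R, A.card = r - 1 → insert x A ∈ H)
    (H' : Finset (Finset V))
    (hH' : H' = Finset.univ.powerset.filter (fun S : Finset V => S.card = r + 1 ∧
      ∀ f ∈ S.powerset, f.card = r → f ∈ H))
    (q : Finset V) (hq : q ∈ H') (z : V) (hz : z ∉ q) :
    (H'.filter (fun q' => z ∈ q' ∧ (q' ∩ q).card = r - 1)).card ≤
      (r + 1) * (3 * r - 4) / 6 :=
  stmt_14_general r hr H hfriend H' hH' q hq z hz
end

section
/- Let r ≥ 3 and let H' be the K_{r+1}^r-decomposition of a friendship r-hypergraph on n vertices. Then |E(H')| ≤ (2/(r(r+1)²))·⌊(r+1)(3r−4)/6⌋·C(n,r) + (4/(r²(r+1)²))·⌈2(r+1)/3⌉·C(n,r−1). -/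
open Finset


private lemma key_arith : ∀ r : ℕ, 3 ≤ r →
    2 * ((r+1)*(3*r-4)/6) + 2 * ((2*(r+1)+2)/3) = r*(r+1) := by
  intro r
  induction r using Nat.strong_induction_on with
  | _ r ih =>
    intro hr
    by_cases h6 : r < 9
    · interval_cases r <;> decide
    · obtain ⟨s, rfl⟩ : ∃ s, r = s + 3 := ⟨r - 3, by omega⟩
      have hs : 3 ≤ s := by omega
      have h := ih s (by omega) hs
      have e1 : (s+3+1)*(3*(s+3)-4) = (s+1)*(3*s-4) + 6*(3*s+4) := by
        zify [show 4 ≤ 3*s by omega, show 4 ≤ 3*(s+3) by omega]; ring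
      have e2 : (2*(s+3+1)+2) = (2*(s+1)+2) + 3*2 := by ring
      rw [e1, e2, Nat.add_mul_div_left _ _ (by norm_num : (0:ℕ) < 6),
        Nat.add_mul_div_left _ _ (by norm_num : (0:ℕ) < 3)]
      have e3 : (s+3)*(s+3+1) = s*(s+1) + (6*s+12) := by ring
      rw [e3, ← h]
      ring

section
variable {V : Type*} [Fintype V] [DecidableEq V] {r : ℕ} {H H' : Finset (Finset V)}

private lemma memH''
    (hH' : H' = Finset.univ.powerset.filter (fun S : Finset V => S.card = r + 1 ∧
      ∀ f ∈ S.powerset, f.card = r → f ∈ H)) {S : Finset V} :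
    S ∈ H' ↔ S.card = r + 1 ∧ ∀ f ⊆ S, f.card = r → f ∈ H := by
  subst hH'
  simp [Finset.mem_filter, Finset.mem_powerset]

private lemma cover_unique (hr : 3 ≤ r)
    (hfriend : ∀ R : Finset V, R.card = r →
      ∃! x : V, x ∉ R ∧ ∀ A ⊆ R, A.card = r - 1 → insert x A ∈ H)
    (hH' : H' = Finset.univ.powerset.filter (fun S : Finset V => S.card = r + 1 ∧
      ∀ f ∈ S.powerset, f.card = r → f ∈ H))
    {R : Finset V} (hR : R.card = r) {S₁ S₂ : Finset V} (hS₁ : S₁ ∈ H') (hS₂ : S₂ ∈ H')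
    (h1 : R ⊆ S₁) (h2 : R ⊆ S₂) : S₁ = S₂ := by
  obtain ⟨hc₁, hsub₁⟩ := (memH'' hH').mp hS₁
  obtain ⟨hc₂, hsub₂⟩ := (memH'' hH').mp hS₂
  obtain ⟨x, hx⟩ : ∃ x, S₁ \ R = {x} := by
    rw [← Finset.card_eq_one, Finset.card_sdiff_of_subset h1, hc₁, hR]; omega
  obtain ⟨y, hy⟩ : ∃ y, S₂ \ R = {y} := by
    rw [← Finset.card_eq_one, Finset.card_sdiff_of_subset h2, hc₂, hR]; omega
  have hxR : x ∉ R := by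
    have : x ∈ S₁ \ R := hx ▸ Finset.mem_singleton_self x
    exact (Finset.mem_sdiff.mp this).2
  have hxS : x ∈ S₁ := by
    have : x ∈ S₁ \ R := hx ▸ Finset.mem_singleton_self x
    exact (Finset.mem_sdiff.mp this).1
  have hyR : y ∉ R := by
    have : y ∈ S₂ \ R := hy ▸ Finset.mem_singleton_self y
    exact (Finset.mem_sdiff.mp this).2
  have hyS : y ∈ S₂ := by
    have : y ∈ S₂ \ R := hy ▸ Finset.mem_singleton_self y
    exact (Finset.mem_sdiff.mp this).1
  have hS₁eq : S₁ = insert x R := by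
    apply Finset.eq_of_subset_of_card_le
    · intro a ha
      by_cases haR : a ∈ R
      · exact Finset.mem_insert_of_mem haR
      · have : a ∈ S₁ \ R := Finset.mem_sdiff.mpr ⟨ha, haR⟩
        rw [hx, Finset.mem_singleton] at this
        exact this ▸ Finset.mem_insert_self x R
    · rw [Finset.card_insert_of_notMem hxR, hc₁, hR]
  have hS₂eq : S₂ = insert y R := by
    apply Finset.eq_of_subset_of_card_le
    · intro a ha
      by_cases haR : a ∈ R
      · exact Finset.mem_insert_of_mem haR
      · have : a ∈ S₂ \ R := Finset.mem_sdiff.mpr ⟨ha, haR⟩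
        rw [hy, Finset.mem_singleton] at this
        exact this ▸ Finset.mem_insert_self y R
    · rw [Finset.card_insert_of_notMem hyR, hc₂, hR]
  obtain ⟨w, -, hwu⟩ := hfriend R hR
  have hfx : x ∉ R ∧ ∀ A ⊆ R, A.card = r - 1 → insert x A ∈ H := by
    refine ⟨hxR, fun A hA hAc => hsub₁ _ ?_ ?_⟩
    · exact Finset.insert_subset hxS (hA.trans h1)
    · rw [Finset.card_insert_of_notMem (fun h => hxR (hA h)), hAc]; omega
  have hfy : y ∉ R ∧ ∀ A ⊆ R, A.card = r - 1 → insert y A ∈ H := by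
    refine ⟨hyR, fun A hA hAc => hsub₂ _ ?_ ?_⟩
    · exact Finset.insert_subset hyS (hA.trans h2)
    · rw [Finset.card_insert_of_notMem (fun h => hyR (hA h)), hAc]; omega
  have : x = y := (hwu x hfx).trans (hwu y hfy).symm
  rw [hS₁eq, hS₂eq, this]

private lemma claim_a (hr : 3 ≤ r)
    (hfriend : ∀ R : Finset V, R.card = r →
      ∃! x : V, x ∉ R ∧ ∀ A ⊆ R, A.card = r - 1 → insert x A ∈ H)
    (hH' : H' = Finset.univ.powerset.filter (fun S : Finset V => S.card = r + 1 ∧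
      ∀ f ∈ S.powerset, f.card = r → f ∈ H))
    {S : Finset V} (hS : S ∈ H') {z : V} (hz : z ∉ S) {u : V} (hu : u ∈ S) :
    ∃ A ∈ S.powersetCard (r-1), insert z A ∉ H ∧ u ∉ A := by
  by_contra hcon
  push_neg at hcon
  obtain ⟨hcard, hsub⟩ := (memH'' hH').mp hS
  have hRcard : (S.erase u).card = r := by
    rw [Finset.card_erase_of_mem hu, hcard]; omega
  have hu' : u ∉ S.erase u := Finset.notMem_erase u S
  obtain ⟨x, -, hxu⟩ := hfriend (S.erase u) hRcard
  have hufriend : u ∉ S.erase u ∧ ∀ A ⊆ S.erase u, A.card = r-1 → insert u A ∈ H := by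
    refine ⟨hu', fun A hA hAc => hsub _ ?_ ?_⟩
    · exact Finset.insert_subset hu (hA.trans (Finset.erase_subset u S))
    · rw [Finset.card_insert_of_notMem (fun h => hu' (hA h)), hAc]; omega
  have hzfriend : z ∉ S.erase u ∧ ∀ A ⊆ S.erase u, A.card = r-1 → insert z A ∈ H := by
    refine ⟨fun h => hz (Finset.erase_subset u S h), fun A hA hAc => ?_⟩
    by_contra hno
    have huA := hcon A (Finset.mem_powersetCard.mpr
      ⟨hA.trans (Finset.erase_subset u S), hAc⟩) hno
    exact hu' (hA huA)
  have : u = z := (hxu u hufriend).trans (hxu z hzfriend).symm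
  exact hz (this ▸ hu)

private lemma claim_b (hr : 3 ≤ r)
    (hfriend : ∀ R : Finset V, R.card = r →
      ∃! x : V, x ∉ R ∧ ∀ A ⊆ R, A.card = r - 1 → insert x A ∈ H)
    (hH' : H' = Finset.univ.powerset.filter (fun S : Finset V => S.card = r + 1 ∧
      ∀ f ∈ S.powerset, f.card = r → f ∈ H))
    {S : Finset V} (hS : S ∈ H') {z : V} (hz : z ∉ S)
    {A : Finset V} (hA : A ∈ S.powersetCard (r-1)) (hAbad : insert z A ∉ H)
    {u v : V} (hu : u ∈ S) (hv : v ∈ S) (huv : u ≠ v) (huA : u ∉ A) (hvA : v ∉ A) :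
    ∃ A' ∈ S.powersetCard (r-1), insert z A' ∉ H ∧ A' ≠ A ∧ (u ∉ A' ∨ v ∉ A') := by
  by_contra hcon
  push_neg at hcon
  obtain ⟨hcard, hsub⟩ := (memH'' hH').mp hS
  obtain ⟨hAS, hAc⟩ := Finset.mem_powersetCard.mp hA
  have hzA : z ∉ A := fun h => hz (hAS h)
  have hzAcard : (insert z A).card = r := by
    rw [Finset.card_insert_of_notMem hzA, hAc]; omega
  -- if A' ⊆ S has card r-1, differs from A, and misses u or v, then insert z A' ∈ H
  have hins : ∀ A' ⊆ S, A'.card = r-1 → A' ≠ A → (u ∉ A' ∨ v ∉ A') → insert z A' ∈ H := by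
    intro A' h1 h2 h3 h4
    by_contra hno
    have := hcon A' (Finset.mem_powersetCard.mpr ⟨h1, h2⟩) hno h3
    rcases h4 with h | h
    · exact h this.1
    · exact h this.2
  -- both u and v are friends of insert z A
  have hfriendP : ∀ w w' : V, w ∈ S → w ∉ A → w' ∉ A → w' ≠ w → (w' = u ∨ w' = v) → (w = u ∨ w = v) →
      (w ∉ insert z A ∧ ∀ B ⊆ insert z A, B.card = r-1 → insert w B ∈ H) := by
    intro w w' hwS hwA hw'A hw'w hw'uv hwuv
    have hwz : w ≠ z := fun h => hz (h ▸ hwS)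
    refine ⟨by simp [Finset.mem_insert, hwz, hwA], fun B hB hBc => ?_⟩
    by_cases hzB : z ∈ B
    · set B' := B.erase z with hB'
      have hB'A : B' ⊆ A := by
        intro a ha
        have haB := Finset.mem_of_mem_erase ha
        have haz := Finset.ne_of_mem_erase ha
        rcases Finset.mem_insert.mp (hB haB) with h | h
        · exact absurd h haz
        · exact h
      have hB'c : B'.card = r - 2 := by
        rw [hB', Finset.card_erase_of_mem hzB, hBc]; omega
      have hwB' : w ∉ B' := fun h => hwA (hB'A h)
      set A' := insert w B' with hA'
      have hA'S : A' ⊆ S := Finset.insert_subset hwS (hB'A.trans hAS)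
      have hA'c : A'.card = r - 1 := by
        rw [hA', Finset.card_insert_of_notMem hwB', hB'c]; omega
      have hA'ne : A' ≠ A := fun h => hwA (h ▸ Finset.mem_insert_self w B')
      have hw'A' : w' ∉ A' := by
        rw [hA', Finset.mem_insert]
        push_neg
        exact ⟨hw'w, fun h => hw'A (hB'A h)⟩
      have huv' : u ∉ A' ∨ v ∉ A' := by
        rcases hw'uv with h | h
        · exact Or.inl (h ▸ hw'A')
        · exact Or.inr (h ▸ hw'A')
      have hc := hins A' hA'S hA'c hA'ne huv'
      have : insert w B = insert z A' := by
        rw [hA', ← Finset.insert_erase hzB, Finset.insert_comm]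
      rw [this]
      exact hc
    · have hBA : B ⊆ A := by
        intro a ha
        rcases Finset.mem_insert.mp (hB ha) with h | h
        · exact absurd (h ▸ ha) hzB
        · exact h
      have hBeq : B = A := Finset.eq_of_subset_of_card_le hBA (by omega)
      subst hBeq
      refine hsub _ (Finset.insert_subset hwS hAS) ?_
      rw [Finset.card_insert_of_notMem hwA, hAc]; omega
  obtain ⟨x, -, hxu⟩ := hfriend (insert z A) hzAcard
  have h1 := hxu u (hfriendP u v hu huA hvA (Ne.symm huv) (Or.inr rfl) (Or.inl rfl))
  have h2 := hxu v (hfriendP v u hv hvA huA huv (Or.inl rfl) (Or.inr rfl))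
  exact huv (h1.trans h2.symm)

private lemma local_bad (hr : 3 ≤ r)
    (hfriend : ∀ R : Finset V, R.card = r →
      ∃! x : V, x ∉ R ∧ ∀ A ⊆ R, A.card = r - 1 → insert x A ∈ H)
    (hH' : H' = Finset.univ.powerset.filter (fun S : Finset V => S.card = r + 1 ∧
      ∀ f ∈ S.powerset, f.card = r → f ∈ H))
    {S : Finset V} (hS : S ∈ H') {z : V} (hz : z ∉ S) :
    2*(r+1) ≤ 3 * ((S.powersetCard (r-1)).filter (fun A => insert z A ∉ H)).card := by
  classical
  set D := (S.powersetCard (r-1)).filter (fun A => insert z A ∉ H) with hD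
  set deg : V → ℕ := fun u => (D.filter (fun A => u ∉ A)).card with hdeg
  have hcardS : S.card = r + 1 := ((memH'' hH').mp hS).1
  -- sum of degrees = 2 |D|
  have hsum : ∑ u ∈ S, deg u = 2 * D.card := by
    have step : ∀ u, deg u = ∑ A ∈ D, if u ∉ A then 1 else 0 := fun u =>
      Finset.card_filter _ _
    calc ∑ u ∈ S, deg u = ∑ u ∈ S, ∑ A ∈ D, if u ∉ A then 1 else 0 :=
          Finset.sum_congr rfl (fun u _ => step u)
      _ = ∑ A ∈ D, ∑ u ∈ S, if u ∉ A then 1 else 0 := Finset.sum_comm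
      _ = ∑ A ∈ D, 2 := by
          refine Finset.sum_congr rfl (fun A hA => ?_)
          obtain ⟨hAS, hAc⟩ := Finset.mem_powersetCard.mp (Finset.mem_filter.mp hA).1
          rw [← Finset.card_filter]
          have : S.filter (fun u => u ∉ A) = S \ A := by
            ext a; simp [Finset.mem_sdiff]
          rw [this, Finset.card_sdiff_of_subset hAS, hcardS, hAc]
          omega
      _ = 2 * D.card := by rw [Finset.sum_const, smul_eq_mul, mul_comm]
  -- every vertex of S has degree ≥ 1
  have hdeg1 : ∀ u ∈ S, 1 ≤ deg u := by
    intro u hu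
    obtain ⟨A, hA, hbad, huA⟩ := claim_a hr hfriend hH' hS hz hu
    have : A ∈ D.filter (fun A => u ∉ A) :=
      Finset.mem_filter.mpr ⟨Finset.mem_filter.mpr ⟨hA, hbad⟩, huA⟩
    exact Finset.card_pos.mpr ⟨A, this⟩
  -- vertices of degree one inject into D
  set L := S.filter (fun u => deg u = 1) with hL
  have hLD : L.card ≤ D.card := by
    have hfex : ∀ u, u ∈ L → ∃ A, A ∈ D ∧ u ∉ A := by
      intro u hu
      obtain ⟨A, hA, hbad, huA⟩ := claim_a hr hfriend hH' hS hz (Finset.mem_filter.mp hu).1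
      exact ⟨A, Finset.mem_filter.mpr ⟨hA, hbad⟩, huA⟩
    set f : V → Finset V := fun u =>
      if h : ∃ A, A ∈ D ∧ u ∉ A then h.choose else ∅ with hf
    have hfmem : ∀ u ∈ L, f u ∈ D ∧ u ∉ f u := by
      intro u hu
      rw [hf]; simp only
      rw [dif_pos (hfex u hu)]
      exact (hfex u hu).choose_spec
    refine Finset.card_le_card_of_injOn f (fun u hu => (hfmem u hu).1) ?_
    intro u hu v hv hfuv
    by_contra huv
    rw [Finset.mem_coe] at hu hv
    obtain ⟨hAD, huA⟩ := hfmem u hu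
    obtain ⟨hAD', hvA⟩ := hfmem v hv
    rw [hfuv] at hAD huA
    set A := f v with hAdef
    have hAm := Finset.mem_filter.mp hAD
    have huS : u ∈ S := (Finset.mem_filter.mp hu).1
    have hvS : v ∈ S := (Finset.mem_filter.mp hv).1
    obtain ⟨A', hA', hbad', hne', hor⟩ :=
      claim_b hr hfriend hH' hS hz hAm.1 hAm.2 huS hvS huv huA hvA
    have hA'D : A' ∈ D := Finset.mem_filter.mpr ⟨hA', hbad'⟩
    rcases hor with h | h
    · have : 1 < deg u := by
        refine Finset.one_lt_card.mpr ⟨A, ?_, A', ?_, fun hc => hne' hc.symm⟩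
        · exact Finset.mem_filter.mpr ⟨hAD, huA⟩
        · exact Finset.mem_filter.mpr ⟨hA'D, h⟩
      have : deg u = 1 := (Finset.mem_filter.mp hu).2
      omega
    · have : 1 < deg v := by
        refine Finset.one_lt_card.mpr ⟨A, ?_, A', ?_, fun hc => hne' hc.symm⟩
        · exact Finset.mem_filter.mpr ⟨hAD, hvA⟩
        · exact Finset.mem_filter.mpr ⟨hA'D, h⟩
      have : deg v = 1 := (Finset.mem_filter.mp hv).2
      omega
  -- lower bound the degree sum
  have hlow : ∑ u ∈ S, (if deg u = 1 then (1:ℕ) else 2) ≤ ∑ u ∈ S, deg u := by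
    refine Finset.sum_le_sum (fun u hu => ?_)
    have := hdeg1 u hu
    split_ifs with h
    · omega
    · omega
  have hsplit : ∑ u ∈ S, (if deg u = 1 then (1:ℕ) else 2)
      = L.card + 2 * (S.card - L.card) := by
    rw [← Finset.sum_filter_add_sum_filter_not S (fun u => deg u = 1)]
    have e1 : ∑ u ∈ S.filter (fun u => deg u = 1), (if deg u = 1 then (1:ℕ) else 2) = L.card := by
      rw [Finset.sum_congr rfl (fun u hu => if_pos (Finset.mem_filter.mp hu).2),
        Finset.sum_const, smul_eq_mul, mul_one, hL]
    have e2 : ∑ u ∈ S.filter (fun u => ¬(deg u = 1)), (if deg u = 1 then (1:ℕ) else 2)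
        = 2 * (S.card - L.card) := by
      rw [Finset.sum_congr rfl (fun u hu => if_neg (Finset.mem_filter.mp hu).2),
        Finset.sum_const, smul_eq_mul]
      have := Finset.card_filter_add_card_filter_not (s := S) (p := fun u => deg u = 1)
      rw [hL]
      omega
    rw [e1, e2]
  have hLS : L.card ≤ S.card := Finset.card_filter_le _ _
  rw [hsplit] at hlow
  rw [hsum] at hlow
  rw [hcardS] at hlow hLS
  omega

private lemma local_good (hr : 3 ≤ r)
    (hfriend : ∀ R : Finset V, R.card = r →
      ∃! x : V, x ∉ R ∧ ∀ A ⊆ R, A.card = r - 1 → insert x A ∈ H)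
    (hH' : H' = Finset.univ.powerset.filter (fun S : Finset V => S.card = r + 1 ∧
      ∀ f ∈ S.powerset, f.card = r → f ∈ H))
    {S : Finset V} (hS : S ∈ H') {z : V} (hz : z ∉ S) :
    ((S.powersetCard (r-1)).filter (fun A => insert z A ∈ H)).card ≤ (r+1)*(3*r-4)/6 := by
  classical
  have hbad := local_bad hr hfriend hH' hS hz
  have hcardS : S.card = r + 1 := ((memH'' hH').mp hS).1
  have hsplit := Finset.card_filter_add_card_filter_not
    (s := S.powersetCard (r-1)) (p := fun A => insert z A ∈ H)
  have hK : (S.powersetCard (r-1)).card = (r+1).choose (r-1) := by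
    rw [Finset.card_powersetCard, hcardS]
  have h2K : 2 * ((r+1).choose (r-1)) = r * (r+1) := by
    have h1 : (r+1).choose (r-1) = (r+1).choose 2 := by
      have : r + 1 - 2 = r - 1 := by omega
      rw [← this, Nat.choose_symm (by omega)]
    rw [h1, Nat.choose_two_right]
    have : (r+1) * (r+1-1) = r * (r+1) := by
      rw [Nat.add_sub_cancel]; ring
    rw [this]
    have h2 : r*(r+1) % 2 = 0 := Nat.even_iff.mp (Nat.even_mul_succ_self r)
    omega
  have harith := key_arith r hr
  omega

private lemma two_d_le (hr : 3 ≤ r)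
    (hfriend : ∀ R : Finset V, R.card = r →
      ∃! x : V, x ∉ R ∧ ∀ A ⊆ R, A.card = r - 1 → insert x A ∈ H)
    (hH' : H' = Finset.univ.powerset.filter (fun S : Finset V => S.card = r + 1 ∧
      ∀ f ∈ S.powerset, f.card = r → f ∈ H))
    {A : Finset V} (hA : A.card = r - 1) :
    2 * (H'.filter (fun S => A ⊆ S)).card
      ≤ (Finset.univ.filter (fun z => insert z A ∈ H)).card := by
  classical
  set filt := H'.filter (fun S => A ⊆ S) with hfilt
  have hmem : ∀ S ∈ filt, S ∈ H' ∧ A ⊆ S := fun S hS => Finset.mem_filter.mp hS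
  have hins : ∀ S ∈ filt, ∀ z ∈ S \ A, insert z A ∈ H ∧ insert z A ⊆ S := by
    intro S hS z hzmem
    obtain ⟨hSH, hAS⟩ := hmem S hS
    obtain ⟨hz1, hz2⟩ := Finset.mem_sdiff.mp hzmem
    have hsub : insert z A ⊆ S := Finset.insert_subset hz1 hAS
    have hcard : (insert z A).card = r := by
      rw [Finset.card_insert_of_notMem hz2, hA]; omega
    exact ⟨((memH'' hH').mp hSH).2 _ hsub hcard, hsub⟩
  have hdisj : ∀ S₁ ∈ filt, ∀ S₂ ∈ filt, S₁ ≠ S₂ → Disjoint (S₁ \ A) (S₂ \ A) := by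
    intro S₁ h1 S₂ h2 hne
    rw [Finset.disjoint_left]
    intro z hz1 hz2
    have ⟨hH1, hsub1⟩ := hins S₁ h1 z hz1
    have ⟨hH2, hsub2⟩ := hins S₂ h2 z hz2
    have hcard : (insert z A).card = r := by
      rw [Finset.card_insert_of_notMem (Finset.mem_sdiff.mp hz1).2, hA]; omega
    exact hne (cover_unique hr hfriend hH' hcard (hmem S₁ h1).1 (hmem S₂ h2).1 hsub1 hsub2)
  have hsubU : filt.biUnion (fun S => S \ A) ⊆ Finset.univ.filter (fun z => insert z A ∈ H) := by
    intro z hz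
    obtain ⟨S, hS, hzS⟩ := Finset.mem_biUnion.mp hz
    exact Finset.mem_filter.mpr ⟨Finset.mem_univ z, (hins S hS z hzS).1⟩
  have hbU := Finset.card_le_card hsubU
  rw [Finset.card_biUnion hdisj] at hbU
  have h2 : ∀ S ∈ filt, (S \ A).card = 2 := by
    intro S hS
    obtain ⟨hSH, hAS⟩ := hmem S hS
    rw [Finset.card_sdiff_of_subset hAS, ((memH'' hH').mp hSH).1, hA]
    omega
  rw [Finset.sum_congr rfl h2, Finset.sum_const, smul_eq_mul, mul_comm] at hbU
  exact hbU

private lemma d_le (hr : 3 ≤ r)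
    (hfriend : ∀ R : Finset V, R.card = r →
      ∃! x : V, x ∉ R ∧ ∀ A ⊆ R, A.card = r - 1 → insert x A ∈ H)
    (hH' : H' = Finset.univ.powerset.filter (fun S : Finset V => S.card = r + 1 ∧
      ∀ f ∈ S.powerset, f.card = r → f ∈ H))
    (huniform : ∀ e ∈ H, e.card = r)
    {A : Finset V} (hA : A.card = r - 1) {z : V} (hzH : insert z A ∈ H) :
    (H'.filter (fun S => A ⊆ S)).card
      ≤ (H'.filter (fun S => A ⊆ S ∧ z ∉ S)).card + 1 := by
  classical
  have hzA : z ∉ A := by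
    intro h
    rw [Finset.insert_eq_self.mpr h] at hzH
    have := huniform _ hzH
    omega
  have hcardzA : (insert z A).card = r := by
    rw [Finset.card_insert_of_notMem hzA, hA]; omega
  have e1 : H'.filter (fun S => A ⊆ S ∧ z ∉ S)
      = (H'.filter (fun S => A ⊆ S)).filter (fun S => z ∉ S) :=
    (Finset.filter_filter _ _ _).symm
  have e2 : H'.filter (fun S => A ⊆ S ∧ z ∈ S)
      = (H'.filter (fun S => A ⊆ S)).filter (fun S => z ∈ S) :=
    (Finset.filter_filter _ _ _).symm
  have hsplitraw := Finset.card_filter_add_card_filter_not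
    (s := H'.filter (fun S => A ⊆ S)) (p := fun S => z ∉ S)
  simp only [not_not] at hsplitraw
  have hone : (H'.filter (fun S => A ⊆ S ∧ z ∈ S)).card ≤ 1 := by
    rw [Finset.card_le_one]
    intro S₁ h1 S₂ h2
    simp only [Finset.mem_filter] at h1 h2
    exact cover_unique hr hfriend hH' hcardzA h1.1 h2.1
      (Finset.insert_subset h1.2.2 h1.2.1) (Finset.insert_subset h2.2.2 h2.2.1)
  rw [e1, e2] at *
  omega

end

theorem stmt_15 {V : Type*} [Fintype V] [DecidableEq V] (r n : ℕ) (hr : 3 ≤ r)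
    (hn : Fintype.card V = n) (hnr : r + 1 ≤ n)
    (H : Finset (Finset V)) (huniform : ∀ e ∈ H, e.card = r)
    (hfriend : ∀ R : Finset V, R.card = r →
      ∃! x : V, x ∉ R ∧ ∀ A ⊆ R, A.card = r - 1 → insert x A ∈ H)
    (H' : Finset (Finset V))
    (hH' : H' = Finset.univ.powerset.filter (fun S : Finset V => S.card = r + 1 ∧
      ∀ f ∈ S.powerset, f.card = r → f ∈ H)) :
    (H'.card : ℚ) ≤
      (2 / (r * (r + 1) ^ 2)) * ((r + 1) * (3 * r - 4) / 6 : ℕ) * n.choose r +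
      (4 / (r ^ 2 * (r + 1) ^ 2)) * ((2 * (r + 1) + 2) / 3 : ℕ) * n.choose (r - 1) := by
  classical
  have hcardS : ∀ S ∈ H', S.card = r + 1 := fun S hS => ((memH'' hH').mp hS).1
  set F := (r + 1) * (3 * r - 4) / 6 with hF
  set G := (2 * (r + 1) + 2) / 3 with hG
  set m := H'.card with hm
  set 𝒜 := (Finset.univ : Finset V).powersetCard (r-1) with h𝒜
  set d : Finset V → ℕ := fun A => (H'.filter (fun S => A ⊆ S)).card with hd
  set K := (r+1).choose (r-1) with hK
  have hAcardall : 𝒜.card = n.choose (r-1) := by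
    rw [h𝒜, Finset.card_powersetCard, Finset.card_univ, hn]
  have h2K : 2 * K = r * (r+1) := by
    rw [hK]
    have h1 : (r+1).choose (r-1) = (r+1).choose 2 := by
      have : r + 1 - 2 = r - 1 := by omega
      rw [← this, Nat.choose_symm (by omega)]
    rw [h1, Nat.choose_two_right]
    have e : (r+1) * (r+1-1) = r * (r+1) := by
      rw [Nat.add_sub_cancel]; ring
    rw [e]
    have h2 : r*(r+1) % 2 = 0 := Nat.even_iff.mp (Nat.even_mul_succ_self r)
    omega
  have harith := key_arith r hr
  -- Step A : sum of degrees of (r-1)-sets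
  have hDsum : ∑ A ∈ 𝒜, d A = m * K := by
    have step : ∀ A, d A = ∑ S ∈ H', if A ⊆ S then 1 else 0 := fun A =>
      Finset.card_filter _ _
    calc ∑ A ∈ 𝒜, d A = ∑ A ∈ 𝒜, ∑ S ∈ H', if A ⊆ S then 1 else 0 :=
          Finset.sum_congr rfl (fun A _ => step A)
      _ = ∑ S ∈ H', ∑ A ∈ 𝒜, if A ⊆ S then 1 else 0 := Finset.sum_comm
      _ = ∑ S ∈ H', K := by
          refine Finset.sum_congr rfl (fun S hS => ?_)
          rw [← Finset.card_filter]
          have e : 𝒜.filter (fun A => A ⊆ S) = S.powersetCard (r-1) := by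
            ext A
            simp only [h𝒜, Finset.mem_filter, Finset.mem_powersetCard,
              Finset.subset_univ, true_and]
            tauto
          rw [e, Finset.card_powersetCard, hcardS S hS, hK]
      _ = m * K := by rw [Finset.sum_const, smul_eq_mul, hm]
  -- the triple count
  set T := ∑ S ∈ H', ∑ z ∈ Sᶜ,
    ((S.powersetCard (r-1)).filter (fun A => insert z A ∈ H)).card with hT
  have hTub : T ≤ m * ((n - (r+1)) * F) := by
    rw [hT]
    calc ∑ S ∈ H', ∑ z ∈ Sᶜ, ((S.powersetCard (r-1)).filter (fun A => insert z A ∈ H)).card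
        ≤ ∑ S ∈ H', ∑ z ∈ Sᶜ, F := by
          refine Finset.sum_le_sum fun S hS => Finset.sum_le_sum fun z hz => ?_
          exact local_good hr hfriend hH' hS (Finset.mem_compl.mp hz)
      _ = ∑ S ∈ H', (n - (r+1)) * F := by
          refine Finset.sum_congr rfl fun S hS => ?_
          rw [Finset.sum_const, smul_eq_mul, Finset.card_compl, hcardS S hS, hn]
      _ = m * ((n - (r+1)) * F) := by rw [Finset.sum_const, smul_eq_mul, hm]
  have hTswap : T = ∑ A ∈ 𝒜, ∑ z ∈ Finset.univ,
      (if insert z A ∈ H then (H'.filter (fun S => A ⊆ S ∧ z ∉ S)).card else 0) := by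
    rw [hT]
    have e1 : ∀ S ∈ H', ∀ z : V,
        ((S.powersetCard (r-1)).filter (fun A => insert z A ∈ H)).card
        = ∑ A ∈ 𝒜, if A ⊆ S ∧ insert z A ∈ H then 1 else 0 := by
      intro S hS z
      rw [← Finset.card_filter]
      congr 1
      ext A
      simp only [h𝒜, Finset.mem_filter, Finset.mem_powersetCard,
        Finset.subset_univ, true_and]
      tauto
    calc ∑ S ∈ H', ∑ z ∈ Sᶜ, ((S.powersetCard (r-1)).filter (fun A => insert z A ∈ H)).card
        = ∑ S ∈ H', ∑ z ∈ Finset.univ, ∑ A ∈ 𝒜,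
            if z ∉ S ∧ A ⊆ S ∧ insert z A ∈ H then 1 else 0 := by
          refine Finset.sum_congr rfl fun S hS => ?_
          have ec : Sᶜ = Finset.univ.filter (fun z => z ∉ S) := by
            ext a; simp
          rw [ec, Finset.sum_filter]
          refine Finset.sum_congr rfl fun z _ => ?_
          by_cases hzS : z ∉ S
          · rw [if_pos hzS, e1 S hS z]
            refine Finset.sum_congr rfl fun A _ => ?_
            refine if_congr ?_ rfl rfl
            tauto
          · rw [if_neg hzS]
            refine (Finset.sum_eq_zero fun A _ => ?_).symm
            rw [if_neg]
            tauto
      _ = ∑ z ∈ Finset.univ, ∑ S ∈ H', ∑ A ∈ 𝒜,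
            if z ∉ S ∧ A ⊆ S ∧ insert z A ∈ H then 1 else 0 := Finset.sum_comm
      _ = ∑ z ∈ Finset.univ, ∑ A ∈ 𝒜, ∑ S ∈ H',
            if z ∉ S ∧ A ⊆ S ∧ insert z A ∈ H then 1 else 0 :=
          Finset.sum_congr rfl fun z _ => Finset.sum_comm
      _ = ∑ A ∈ 𝒜, ∑ z ∈ Finset.univ, ∑ S ∈ H',
            if z ∉ S ∧ A ⊆ S ∧ insert z A ∈ H then 1 else 0 := Finset.sum_comm
      _ = ∑ A ∈ 𝒜, ∑ z ∈ Finset.univ,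
            (if insert z A ∈ H then (H'.filter (fun S => A ⊆ S ∧ z ∉ S)).card else 0) := by
          refine Finset.sum_congr rfl fun A _ => Finset.sum_congr rfl fun z _ => ?_
          by_cases hzH : insert z A ∈ H
          · rw [if_pos hzH, Finset.card_filter]
            refine Finset.sum_congr rfl fun S _ => ?_
            refine if_congr ?_ rfl rfl
            tauto
          · rw [if_neg hzH]
            refine Finset.sum_eq_zero fun S _ => ?_
            rw [if_neg]
            tauto
  have hperA : ∀ A ∈ 𝒜, 2 * (d A * (d A - 1)) ≤ ∑ z ∈ Finset.univ,
      (if insert z A ∈ H then (H'.filter (fun S => A ⊆ S ∧ z ∉ S)).card else 0) := by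
    intro A hA
    have hAc : A.card = r - 1 := (Finset.mem_powersetCard.mp (by rwa [h𝒜] at hA)).2
    have h1 := two_d_le hr hfriend hH' hAc
    have h2 : ∀ z, insert z A ∈ H →
        d A - 1 ≤ (H'.filter (fun S => A ⊆ S ∧ z ∉ S)).card := by
      intro z hz
      have h3 := d_le hr hfriend hH' huniform hAc hz
      have h4 : d A = (H'.filter (fun S => A ⊆ S)).card := rfl
      omega
    calc 2 * (d A * (d A - 1)) = (2 * (H'.filter (fun S => A ⊆ S)).card) * (d A - 1) := by
          show 2 * (d A * (d A - 1)) = (2 * d A) * (d A - 1)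
          ring
      _ ≤ (Finset.univ.filter (fun z => insert z A ∈ H)).card * (d A - 1) :=
          Nat.mul_le_mul_right _ h1
      _ = ∑ z ∈ Finset.univ.filter (fun z => insert z A ∈ H), (d A - 1) := by
          rw [Finset.sum_const, smul_eq_mul]
      _ ≤ ∑ z ∈ Finset.univ.filter (fun z => insert z A ∈ H),
            (H'.filter (fun S => A ⊆ S ∧ z ∉ S)).card :=
          Finset.sum_le_sum fun z hz => h2 z (Finset.mem_filter.mp hz).2
      _ = ∑ z ∈ Finset.univ,
            (if insert z A ∈ H then (H'.filter (fun S => A ⊆ S ∧ z ∉ S)).card else 0) :=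
          Finset.sum_filter _ _
  have hTlb : ∑ A ∈ 𝒜, 2 * (d A * (d A - 1)) ≤ T := by
    rw [hTswap]; exact Finset.sum_le_sum hperA
  have hsq : ∀ A : Finset V, 2 * (d A * d A) ≤ 2 * d A + 2 * (d A * (d A - 1)) := by
    intro A
    rcases Nat.eq_zero_or_pos (d A) with h | h
    · simp [h]
    · obtain ⟨k, hk⟩ : ∃ k, d A = k + 1 := ⟨d A - 1, by omega⟩
      rw [hk]
      simp only [Nat.add_sub_cancel]
      nlinarith
  have hQ : 2 * ∑ A ∈ 𝒜, d A * d A ≤ 2 * (m * K) + m * ((n - (r+1)) * F) := by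
    calc 2 * ∑ A ∈ 𝒜, d A * d A = ∑ A ∈ 𝒜, 2 * (d A * d A) := by rw [Finset.mul_sum]
      _ ≤ ∑ A ∈ 𝒜, (2 * d A + 2 * (d A * (d A - 1))) :=
          Finset.sum_le_sum fun A _ => hsq A
      _ = 2 * ∑ A ∈ 𝒜, d A + ∑ A ∈ 𝒜, 2 * (d A * (d A - 1)) := by
          rw [Finset.sum_add_distrib, Finset.mul_sum]
      _ ≤ 2 * (m * K) + T := by
          rw [hDsum]
          exact Nat.add_le_add_left hTlb _
      _ ≤ 2 * (m * K) + m * ((n - (r+1)) * F) := Nat.add_le_add_left hTub _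
  -- move to ℚ
  set Mq : ℚ := (m : ℚ) with hMq
  set Kq : ℚ := (K : ℚ) with hKqdef
  set Fq : ℚ := (F : ℚ) with hFq
  set Gq : ℚ := (G : ℚ) with hGq
  set Nq : ℚ := (n.choose (r-1) : ℚ) with hNq
  set Cq : ℚ := (n.choose r : ℚ) with hCq
  have hKq : 2 * Kq = (r:ℚ) * ((r:ℚ)+1) := by
    rw [hKqdef]
    exact_mod_cast congrArg (Nat.cast (R := ℚ)) h2K
  have hFGq : 2 * Fq + 2 * Gq = (r:ℚ) * ((r:ℚ)+1) := by
    rw [hFq, hGq]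
    exact_mod_cast congrArg (Nat.cast (R := ℚ)) harith
  have hCrq : Cq * (r:ℚ) = Nq * ((n:ℚ) - (r:ℚ) + 1) := by
    have hCr := Nat.choose_succ_right_eq n (r-1)
    rw [show r - 1 + 1 = r from by omega] at hCr
    have h1 : ((n - (r-1) : ℕ) : ℚ) = (n:ℚ) - (r:ℚ) + 1 := by
      rw [Nat.cast_sub (show r - 1 ≤ n by omega),
        Nat.cast_sub (show 1 ≤ r by omega)]
      push_cast
      ring
    calc Cq * (r:ℚ) = ((n.choose r * r : ℕ) : ℚ) := by rw [hCq]; push_cast; ring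
      _ = ((n.choose (r-1) * (n - (r-1)) : ℕ) : ℚ) := by rw [hCr]
      _ = Nq * ((n:ℚ) - (r:ℚ) + 1) := by rw [Nat.cast_mul, h1, hNq]
  have hCS : (Mq * Kq)^2 ≤ Nq * ∑ A ∈ 𝒜, (d A:ℚ)^2 := by
    have hcs := Finset.sum_mul_sq_le_sq_mul_sq 𝒜 (fun A => (d A : ℚ)) (fun _ => 1)
    simp only [mul_one, one_pow] at hcs
    have hsumcast : (∑ A ∈ 𝒜, (d A:ℚ)) = Mq * Kq := by
      rw [← Nat.cast_sum, hDsum, hMq, hKqdef]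
      push_cast
      ring
    rw [hsumcast, Finset.sum_const, nsmul_eq_mul, mul_one, hAcardall] at hcs
    calc (Mq * Kq)^2 ≤ (∑ A ∈ 𝒜, (d A:ℚ)^2) * Nq := by rw [← hNq] at hcs; exact hcs
      _ = Nq * ∑ A ∈ 𝒜, (d A:ℚ)^2 := by ring
  have hQq : 2 * (∑ A ∈ 𝒜, (d A:ℚ)^2) ≤ 2 * (Mq * Kq) + Mq * (((n:ℚ) - (r:ℚ) - 1) * Fq) := by
    have h0 : ((2 * ∑ A ∈ 𝒜, d A * d A : ℕ) : ℚ)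
        ≤ ((2 * (m * K) + m * ((n - (r+1)) * F) : ℕ) : ℚ) := Nat.cast_le.mpr hQ
    push_cast [Nat.cast_sub hnr] at h0
    have e : (∑ A ∈ 𝒜, ((d A:ℚ) * (d A:ℚ))) = ∑ A ∈ 𝒜, (d A:ℚ)^2 :=
      Finset.sum_congr rfl fun A _ => (sq (d A:ℚ)).symm
    rw [e] at h0
    calc 2 * (∑ A ∈ 𝒜, (d A:ℚ)^2) ≤ 2 * (Mq * Kq) + Mq * (((n:ℚ) - ((r:ℚ)+1)) * Fq) := h0
      _ = 2 * (Mq * Kq) + Mq * (((n:ℚ) - (r:ℚ) - 1) * Fq) := by ring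
  have hmain : 2 * Mq * Kq^2 * Mq ≤ Mq * (Nq * (2 * Kq + ((n:ℚ) - (r:ℚ) - 1) * Fq)) := by
    have hNq0 : (0:ℚ) ≤ Nq := by rw [hNq]; positivity
    have h1 : Nq * (2 * ∑ A ∈ 𝒜, (d A:ℚ)^2)
        ≤ Nq * (2 * (Mq * Kq) + Mq * (((n:ℚ) - (r:ℚ) - 1) * Fq)) :=
      mul_le_mul_of_nonneg_left hQq hNq0
    calc 2 * Mq * Kq^2 * Mq = 2 * (Mq * Kq)^2 := by ring
      _ ≤ 2 * (Nq * ∑ A ∈ 𝒜, (d A:ℚ)^2) := by linarith [hCS]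
      _ = Nq * (2 * ∑ A ∈ 𝒜, (d A:ℚ)^2) := by ring
      _ ≤ Nq * (2 * (Mq * Kq) + Mq * (((n:ℚ) - (r:ℚ) - 1) * Fq)) := h1
      _ = Mq * (Nq * (2 * Kq + ((n:ℚ) - (r:ℚ) - 1) * Fq)) := by ring
  rcases Nat.eq_zero_or_pos m with hm0 | hmpos
  · have hM0 : Mq = 0 := by rw [hMq, hm0]; norm_num
    rw [hM0]
    have hq1 : (0:ℚ) ≤ Fq := by rw [hFq]; positivity
    have hq2 : (0:ℚ) ≤ Gq := by rw [hGq]; positivity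
    have hq3 : (0:ℚ) ≤ Cq := by rw [hCq]; positivity
    have hq4 : (0:ℚ) ≤ Nq := by rw [hNq]; positivity
    have hq5 : (0:ℚ) ≤ (r:ℚ) := by positivity
    have d1 : (0:ℚ) ≤ 2 / ((r:ℚ) * ((r:ℚ) + 1) ^ 2) := by positivity
    have d2 : (0:ℚ) ≤ 4 / ((r:ℚ) ^ 2 * ((r:ℚ) + 1) ^ 2) := by positivity
    have := add_nonneg (mul_nonneg (mul_nonneg d1 hq1) hq3) (mul_nonneg (mul_nonneg d2 hq2) hq4)
    linarith [this]
  · have hMq0 : (0:ℚ) < Mq := by rw [hMq]; exact_mod_cast hmpos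
    have h3 : 2 * Mq * Kq^2 ≤ Nq * (2 * Kq + ((n:ℚ) - (r:ℚ) - 1) * Fq) := by
      have := hmain
      rw [show 2 * Mq * Kq^2 * Mq = Mq * (2 * Mq * Kq^2) from by ring] at this
      exact le_of_mul_le_mul_left this hMq0
    have hRHS : Nq * (2 * Kq + ((n:ℚ) - (r:ℚ) - 1) * Fq) = Fq * (r:ℚ) * Cq + 2 * Gq * Nq := by
      linear_combination Nq * hKq - Nq * hFGq - Fq * hCrq
    have hfin : Mq * (2 * Kq^2) ≤ Fq * (r:ℚ) * Cq + 2 * Gq * Nq := by linarith [h3, hRHS]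
    have hr3 : (3:ℚ) ≤ (r:ℚ) := by exact_mod_cast hr
    have hKval : Kq = (r:ℚ) * ((r:ℚ)+1) / 2 := by linarith [hKq]
    have hKpos : (0:ℚ) < 2 * Kq^2 := by rw [hKval]; positivity
    have hr0 : (r:ℚ) ≠ 0 := by positivity
    have hr10 : (r:ℚ) + 1 ≠ 0 := by positivity
    have hfinal : Mq ≤ (Fq * (r:ℚ) * Cq + 2 * Gq * Nq) / (2 * Kq^2) := by
      rw [le_div_iff₀ hKpos]
      linarith [hfin]
    have heq : (Fq * (r:ℚ) * Cq + 2 * Gq * Nq) / (2 * Kq^2)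
        = 2 / ((r:ℚ) * ((r:ℚ) + 1) ^ 2) * Fq * Cq
          + 4 / ((r:ℚ) ^ 2 * ((r:ℚ) + 1) ^ 2) * Gq * Nq := by
      rw [hKval]
      field_simp
      ring
    rw [heq] at hfinal
    linarith [hfinal]
end

section
/- Let H be a friendship r-hypergraph (r ≥ 3) on n ≥ r+1 vertices whose K_{r+1}^r-decomposition H' satisfies |E(H')| = (1/r)C(n−1,r−1). If F denotes the (r−1)-uniform hypergraph of sociable sets (those (r−1)-sets contained in at least two edges of H'), then F contains no copy of K_r^{r−1}. -/
theorem stmt_17 {V : Type*} [Fintype V] [DecidableEq V] (r n : ℕ) (hr : 3 ≤ r)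
    (hn : Fintype.card V = n) (hnr : r + 1 ≤ n)
    (H : Finset (Finset V)) (huniform : ∀ e ∈ H, e.card = r)
    (hfriend : ∀ R : Finset V, R.card = r →
      ∃! x : V, x ∉ R ∧ ∀ A ⊆ R, A.card = r - 1 → insert x A ∈ H)
    (H' : Finset (Finset V))
    (hH' : H' = Finset.univ.powerset.filter (fun S : Finset V => S.card = r + 1 ∧
      ∀ f ∈ S.powerset, f.card = r → f ∈ H))
    (hsize : r * H'.card = (n - 1).choose (r - 1)) :
    ∀ S : Finset V, S.card = r →
      ¬ (∀ A ⊆ S, A.card = r - 1 → 2 ≤ (H'.filter (fun q => A ⊆ q)).card) := by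
  classical
  intro S hS hsoc
  have hV : Nonempty V := by
    rw [← Fintype.card_pos_iff, hn]; omega
  obtain ⟨v0⟩ := hV
  -- the friend function
  have hfr0 : ∀ B : Finset V, ∃ x : V, B.card = r →
      ((x ∉ B ∧ ∀ A ⊆ B, A.card = r - 1 → insert x A ∈ H) ∧
       ∀ y : V, (y ∉ B ∧ ∀ A ⊆ B, A.card = r - 1 → insert y A ∈ H) → y = x) := by
    intro B
    by_cases h : B.card = r
    · obtain ⟨x, hx, hux⟩ := hfriend B h
      exact ⟨x, fun _ => ⟨hx, hux⟩⟩
    · exact ⟨v0, fun hc => absurd hc h⟩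
  choose fr hfr using hfr0
  have frSpec : ∀ B : Finset V, B.card = r →
      fr B ∉ B ∧ ∀ A ⊆ B, A.card = r - 1 → insert (fr B) A ∈ H :=
    fun B h => (hfr B h).1
  have frUniq : ∀ B : Finset V, B.card = r → ∀ y : V,
      (y ∉ B ∧ ∀ A ⊆ B, A.card = r - 1 → insert y A ∈ H) → y = fr B :=
    fun B h => (hfr B h).2
  have memH' : ∀ T : Finset V, T ∈ H' ↔ (T.card = r + 1 ∧ ∀ g ⊆ T, g.card = r → g ∈ H) := by
    intro T
    rw [hH', Finset.mem_filter]
    simp only [Finset.mem_powerset, Finset.subset_univ, true_and]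
  have subMemH : ∀ T ∈ H', ∀ g ⊆ T, g.card = r → g ∈ H :=
    fun T hT => ((memH' T).1 hT).2
  have cardH' : ∀ T ∈ H', T.card = r + 1 := fun T hT => ((memH' T).1 hT).1
  -- each edge of H lies in the H'-edge obtained by adding its friend
  have covMem : ∀ e ∈ H, insert (fr e) e ∈ H' := by
    intro e he
    have hec := huniform e he
    obtain ⟨hfe, hfp⟩ := frSpec e hec
    rw [memH']
    refine ⟨by rw [Finset.card_insert_of_notMem hfe, hec], ?_⟩
    intro g hg hgc
    by_cases hx : fr e ∈ g
    · have h1 : g.erase (fr e) ⊆ e := by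
        rw [← Finset.subset_insert_iff]; exact hg
      have h2 : (g.erase (fr e)).card = r - 1 := by
        rw [Finset.card_erase_of_mem hx, hgc]
      have h3 := hfp _ h1 h2
      rwa [Finset.insert_erase hx] at h3
    · have h1 : g ⊆ e := by
        have h2 := Finset.subset_insert_iff.1 hg
        rwa [Finset.erase_eq_of_notMem hx] at h2
      have h4 : g = e := Finset.eq_of_subset_of_card_le h1 (by rw [hgc, hec])
      rwa [h4]
  -- an H'-edge containing an r-set is determined by it
  have covUnique : ∀ T ∈ H', ∀ e, e ⊆ T → e.card = r → T = insert (fr e) e := by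
    intro T hT e heT hec
    have hTc := cardH' T hT
    have h1 : (T \ e).card = 1 := by
      rw [Finset.card_sdiff_of_subset heT, hTc, hec]; omega
    obtain ⟨x, hx⟩ := Finset.card_eq_one.1 h1
    have hxm : x ∈ T ∧ x ∉ e := by
      have h2 : x ∈ T \ e := by rw [hx]; exact Finset.mem_singleton_self x
      exact Finset.mem_sdiff.1 h2
    have hxfr : x = fr e := by
      apply frUniq e hec
      refine ⟨hxm.2, fun A hA hAc => ?_⟩
      refine subMemH T hT _ ?_ ?_
      · exact Finset.insert_subset hxm.1 (hA.trans heT)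
      · rw [Finset.card_insert_of_notMem (fun hc => hxm.2 (hA hc)), hAc]; omega
    apply Finset.Subset.antisymm
    · intro a ha
      by_cases hae : a ∈ e
      · exact Finset.mem_insert_of_mem hae
      · have h5 : a ∈ T \ e := Finset.mem_sdiff.2 ⟨ha, hae⟩
        rw [hx, Finset.mem_singleton] at h5
        rw [h5, hxfr]
        exact Finset.mem_insert_self _ _
    · intro a ha
      rcases Finset.mem_insert.1 ha with h | h
      · rw [h, ← hxfr]; exact hxm.1
      · exact heT h
  have edgeUnique : ∀ T₁, T₁ ∈ H' → ∀ T₂, T₂ ∈ H' → ∀ e : Finset V,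
      e ⊆ T₁ → e ⊆ T₂ → e.card = r → T₁ = T₂ := by
    intro T₁ h1 T₂ h2 e he1 he2 hec
    rw [covUnique T₁ h1 e he1 hec, covUnique T₂ h2 e he2 hec]
  -- THE STAR LEMMA
  have star : ∀ u : V, ∀ T, T ∈ H' → u ∉ T → ∃ z, z ∈ T ∧
      (∀ x, x ∈ T → x ≠ z → (insert u (T \ {x, z}) ∉ H ∧ z ∉ insert u (T \ {x, z}) ∧
        ∀ A ⊆ insert u (T \ {x, z}), A.card = r - 1 → insert z A ∈ H)) ∧
      (∀ x, x ∈ T → ∀ w, w ∈ T → x ≠ w → x ≠ z → w ≠ z → insert u (T \ {x, w}) ∈ H) := by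
    intro u T hT huT
    set D : Finset (Finset V) := (Finset.univ.erase u).powersetCard (r - 1) with hD
    set Φ : Finset V → Finset V :=
      fun B => insert (fr (insert (fr (insert u B)) B)) (insert (fr (insert u B)) B) with hΦ
    have hDmem : ∀ B ∈ D, u ∉ B ∧ B.card = r - 1 := by
      intro B hB
      rw [hD, Finset.mem_powersetCard] at hB
      exact ⟨fun hc => (Finset.mem_erase.1 (hB.1 hc)).1 rfl, hB.2⟩
    have hRcard : ∀ B ∈ D, (insert u B).card = r := by
      intro B hB
      rw [Finset.card_insert_of_notMem (hDmem B hB).1, (hDmem B hB).2]; omega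
    have hhB : ∀ B ∈ D, insert (fr (insert u B)) B ∈ H := by
      intro B hB
      exact (frSpec (insert u B) (hRcard B hB)).2 B (Finset.subset_insert u B) (hDmem B hB).2
    have hΦH' : ∀ B ∈ D, Φ B ∈ H' := by
      intro B hB
      simp only [hΦ]
      exact covMem _ (hhB B hB)
    have hfrnotB : ∀ B ∈ D, fr (insert u B) ∉ B ∧ fr (insert u B) ≠ u := by
      intro B hB
      have h1 := (frSpec (insert u B) (hRcard B hB)).1
      exact ⟨fun hc => h1 (Finset.mem_insert_of_mem hc),
             fun hc => h1 (by rw [hc]; exact Finset.mem_insert_self u B)⟩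
    have hcardhB : ∀ B ∈ D, (insert (fr (insert u B)) B).card = r := by
      intro B hB
      rw [Finset.card_insert_of_notMem (hfrnotB B hB).1, (hDmem B hB).2]; omega
    have core : ∀ T', T' ∈ H' → u ∉ T' →
        (D.filter fun B => Φ B = T').card ≤ r ∧
        ((D.filter fun B => Φ B = T').card = r → ∃ z, z ∈ T' ∧
          (∀ x, x ∈ T' → x ≠ z → (insert u (T' \ {x, z}) ∉ H ∧ z ∉ insert u (T' \ {x, z}) ∧
            ∀ A ⊆ insert u (T' \ {x, z}), A.card = r - 1 → insert z A ∈ H)) ∧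
          (∀ x, x ∈ T' → ∀ w, w ∈ T' → x ≠ w → x ≠ z → w ≠ z →
            insert u (T' \ {x, w}) ∈ H)) := by
      intro T' hT' huT'
      set F := D.filter fun B => Φ B = T' with hFdef
      have hFD : ∀ B ∈ F, B ∈ D := fun B hB => (Finset.mem_filter.1 hB).1
      have hFΦ : ∀ B ∈ F, Φ B = T' := fun B hB => (Finset.mem_filter.1 hB).2
      have hsub : ∀ B ∈ F, insert (fr (insert u B)) B ⊆ T' := by
        intro B hB
        rw [← hFΦ B hB]
        simp only [hΦ]
        exact Finset.subset_insert _ _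
      have hBT : ∀ B ∈ F, B ⊆ T' :=
        fun B hB => (Finset.subset_insert _ _).trans (hsub B hB)
      have hfrT : ∀ B ∈ F, fr (insert u B) ∈ T' :=
        fun B hB => hsub B hB (Finset.mem_insert_self _ _)
      have hnf0 : ∀ B : Finset V, ∃ a : V, B ∈ F → T' \ insert (fr (insert u B)) B = {a} := by
        intro B
        by_cases hB : B ∈ F
        · have h1 : (T' \ insert (fr (insert u B)) B).card = 1 := by
            rw [Finset.card_sdiff_of_subset (hsub B hB), cardH' T' hT', hcardhB B (hFD B hB)]
            omega
          obtain ⟨a, ha⟩ := Finset.card_eq_one.1 h1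
          exact ⟨a, fun _ => ha⟩
        · exact ⟨v0, fun hc => absurd hc hB⟩
      choose nf hnf using hnf0
      have hnfT : ∀ B ∈ F, nf B ∈ T' ∧ nf B ∉ B ∧ nf B ≠ fr (insert u B) := by
        intro B hB
        have h1 : nf B ∈ T' \ insert (fr (insert u B)) B := by
          rw [hnf B hB]; exact Finset.mem_singleton_self _
        rw [Finset.mem_sdiff, Finset.mem_insert] at h1
        push_neg at h1
        exact ⟨h1.1, h1.2.2, h1.2.1⟩
      have hBm : ∀ B ∈ F, ∀ a : V, a ∈ B ↔ (a ∈ T' ∧ a ≠ nf B ∧ a ≠ fr (insert u B)) := by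
        intro B hB a
        constructor
        · intro haB
          exact ⟨hBT B hB haB, fun hc => (hnfT B hB).2.1 (hc ▸ haB),
            fun hc => (hfrnotB B (hFD B hB)).1 (hc ▸ haB)⟩
        · rintro ⟨haT, hanf, hafr⟩
          by_contra haB
          have h1 : a ∈ T' \ insert (fr (insert u B)) B := by
            rw [Finset.mem_sdiff, Finset.mem_insert]
            exact ⟨haT, fun hc => hc.elim hafr haB⟩
          rw [hnf B hB, Finset.mem_singleton] at h1
          exact hanf h1
      have hBeq : ∀ B ∈ F, T' \ {nf B, fr (insert u B)} = B := by
        intro B hB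
        ext a
        rw [Finset.mem_sdiff, Finset.mem_insert, Finset.mem_singleton, hBm B hB a]
        constructor
        · rintro ⟨haT, h2⟩
          push_neg at h2
          exact ⟨haT, h2.1, h2.2⟩
        · rintro ⟨haT, h1, h2⟩
          exact ⟨haT, fun hc => hc.elim h1 h2⟩
      have L1 : ∀ B ∈ F, insert u B ∉ H := by
        intro B hB hc
        have h1 : insert (fr (insert u B)) (insert u B) ∈ H' := covMem _ hc
        have h2 : insert (fr (insert u B)) B ⊆ insert (fr (insert u B)) (insert u B) := by
          intro a ha
          rcases Finset.mem_insert.1 ha with h | h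
          · rw [h]; exact Finset.mem_insert_self _ _
          · exact Finset.mem_insert_of_mem (Finset.mem_insert_of_mem h)
        have h3 := edgeUnique T' hT' _ h1 _ (hsub B hB) h2 (hcardhB B (hFD B hB))
        apply huT'
        rw [h3]
        exact Finset.mem_insert_of_mem (Finset.mem_insert_self u B)
      have L2 : ∀ B ∈ F, ∀ w, w ∈ B → insert u (T' \ {nf B, w}) ∈ H := by
        intro B hB w hw
        have hBD := hFD B hB
        have hA1 : insert u (B.erase w) ⊆ insert u B := by
          intro a ha
          rcases Finset.mem_insert.1 ha with h | h
          · rw [h]; exact Finset.mem_insert_self _ _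
          · exact Finset.mem_insert_of_mem (Finset.erase_subset _ _ h)
        have hA2 : (insert u (B.erase w)).card = r - 1 := by
          rw [Finset.card_insert_of_notMem
              (fun hc => (hDmem B hBD).1 (Finset.erase_subset _ _ hc)),
            Finset.card_erase_of_mem hw, (hDmem B hBD).2]
          omega
        have h3 := (frSpec (insert u B) (hRcard B hBD)).2 _ hA1 hA2
        have h5 : T' \ {nf B, w} = insert (fr (insert u B)) (B.erase w) := by
          ext a
          rw [Finset.mem_sdiff, Finset.mem_insert, Finset.mem_singleton, Finset.mem_insert,
            Finset.mem_erase]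
          constructor
          · rintro ⟨haT, h6⟩
            push_neg at h6
            by_cases hafr : a = fr (insert u B)
            · exact Or.inl hafr
            · exact Or.inr ⟨h6.2, (hBm B hB a).2 ⟨haT, h6.1, hafr⟩⟩
          · rintro (h | ⟨haw, haB⟩)
            · refine ⟨by rw [h]; exact hfrT B hB, ?_⟩
              rintro (hc | hc)
              · exact (hnfT B hB).2.2 (hc ▸ h)
              · exact (hfrnotB B hBD).1 (h ▸ hc.symm ▸ hw)
            · have h7 := (hBm B hB a).1 haB
              exact ⟨h7.1, fun hc => hc.elim (fun h8 => h7.2.1 h8) (fun h8 => haw h8)⟩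
        rw [h5, Finset.insert_comm]
        exact h3
      have inj : ∀ B₁ ∈ F, ∀ B₂ ∈ F, nf B₁ = nf B₂ → B₁ = B₂ := by
        intro B₁ h1 B₂ h2 he
        by_contra hne
        by_cases hff : fr (insert u B₁) = fr (insert u B₂)
        · exact hne (by rw [← hBeq B₁ h1, ← hBeq B₂ h2, he, hff])
        · have h3 : fr (insert u B₂) ∈ B₁ := by
            rw [hBm B₁ h1]
            refine ⟨hfrT B₂ h2, ?_, fun hc => hff hc.symm⟩
            intro hc
            exact (hnfT B₂ h2).2.2 (by rw [← he, ← hc])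
          have h4 := L2 B₁ h1 _ h3
          rw [he, hBeq B₂ h2] at h4
          exact L1 B₂ h2 h4
      have key : ∀ B ∈ F, ∀ B' ∈ F, nf B' = fr (insert u B) → False := by
        intro B hB B' hB' hy
        by_cases hBB : B' = B
        · rw [hBB] at hy
          exact (hnfT B hB).2.2 hy
        · by_cases hff : fr (insert u B') = nf B
          · apply hBB
            rw [← hBeq B' hB', ← hBeq B hB, hy, hff, Finset.pair_comm]
          · have h3 : nf B ∈ B' := by
              rw [hBm B' hB']
              refine ⟨(hnfT B hB).1, ?_, fun hc => hff hc.symm⟩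
              intro hc
              exact hBB (inj B' hB' B hB hc.symm)
            have h4 := L2 B' hB' _ h3
            rw [hy, Finset.pair_comm, hBeq B hB] at h4
            exact L1 B hB h4
      have himg : F.image nf ⊆ T' := by
        intro a ha
        obtain ⟨B, hB, rfl⟩ := Finset.mem_image.1 ha
        exact (hnfT B hB).1
      have hinjOn : Set.InjOn nf ↑F := fun B₁ h1 B₂ h2 h =>
        inj B₁ (Finset.mem_coe.1 h1) B₂ (Finset.mem_coe.1 h2) h
      have hcardim : (F.image nf).card = F.card := Finset.card_image_of_injOn hinjOn
      have hFle : F.card ≤ r + 1 := by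
        rw [← hcardim]
        calc (F.image nf).card ≤ T'.card := Finset.card_le_card himg
          _ = r + 1 := cardH' T' hT'
      have hnotfull : F.card ≠ r + 1 := by
        intro hc
        have him2 : F.image nf = T' := by
          apply Finset.eq_of_subset_of_card_le himg
          rw [hcardim, hc, cardH' T' hT']
        have hFne : F.Nonempty := by
          rw [← Finset.card_pos, hc]; omega
        obtain ⟨B, hB⟩ := hFne
        have h1 : fr (insert u B) ∈ F.image nf := by
          rw [him2]; exact hfrT B hB
        obtain ⟨B', hB', hy⟩ := Finset.mem_image.1 h1
        exact key B hB B' hB' hy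
      refine ⟨by omega, fun hcard => ?_⟩
      have hz : ∃ z, z ∈ T' ∧ z ∉ F.image nf := by
        by_contra hc
        push_neg at hc
        have h2 : T' ⊆ F.image nf := fun a ha => hc a ha
        have h3 := Finset.card_le_card h2
        rw [hcardim, hcard, cardH' T' hT'] at h3
        omega
      obtain ⟨z, hzT', hznim⟩ := hz
      have himeq : F.image nf = T'.erase z := by
        apply Finset.eq_of_subset_of_card_le
        · intro a ha
          exact Finset.mem_erase.2 ⟨fun hc => hznim (hc ▸ ha), himg ha⟩
        · rw [Finset.card_erase_of_mem hzT', cardH' T' hT', hcardim, hcard]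
          omega
      have hzfr : ∀ B ∈ F, fr (insert u B) = z := by
        intro B hB
        by_contra hc
        have h1 : fr (insert u B) ∈ T'.erase z :=
          Finset.mem_erase.2 ⟨hc, hfrT B hB⟩
        rw [← himeq] at h1
        obtain ⟨B', hB', hy⟩ := Finset.mem_image.1 h1
        exact key B hB B' hB' hy
      have hget : ∀ x, x ∈ T' → x ≠ z → ∃ B, B ∈ F ∧ nf B = x ∧ T' \ {x, z} = B := by
        intro x hxT hxz
        have h1 : x ∈ F.image nf := by
          rw [himeq]; exact Finset.mem_erase.2 ⟨hxz, hxT⟩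
        obtain ⟨B, hB, hnfB⟩ := Finset.mem_image.1 h1
        refine ⟨B, hB, hnfB, ?_⟩
        rw [← hnfB, ← hzfr B hB]
        exact hBeq B hB
      refine ⟨z, hzT', ?_, ?_⟩
      · intro x hxT hxz
        obtain ⟨B, hB, hnfB, hBx⟩ := hget x hxT hxz
        rw [hBx]
        refine ⟨L1 B hB, ?_, ?_⟩
        · rw [← hzfr B hB]
          exact (frSpec (insert u B) (hRcard B (hFD B hB))).1
        · rw [← hzfr B hB]
          exact (frSpec (insert u B) (hRcard B (hFD B hB))).2
      · intro x hxT w hwT hxw hxz hwz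
        obtain ⟨B, hB, hnfB, hBx⟩ := hget x hxT hxz
        have hwB : w ∈ B := by
          rw [hBm B hB]
          refine ⟨hwT, fun hc => hxw ?_, fun hc => hwz ?_⟩
          · rw [hnfB] at hc; exact hc.symm
          · rw [hzfr B hB] at hc; exact hc
        have h4 := L2 B hB w hwB
        rw [hnfB] at h4
        exact h4
    have hchoose_r : r.choose (r - 1) = r := by
      have h1 := Nat.choose_symm (Nat.sub_le r 1)
      rw [show r - (r - 1) = 1 by omega, Nat.choose_one_right] at h1
      exact h1.symm
    have bound : ∀ T' ∈ H', (D.filter fun B => Φ B = T').card ≤ r := by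
      intro T' hT'
      by_cases huT' : u ∈ T'
      · have hsub2 : (D.filter fun B => Φ B = T') ⊆ (T'.erase u).powersetCard (r - 1) := by
          intro B hB
          obtain ⟨hBD, hBT'⟩ := Finset.mem_filter.1 hB
          rw [Finset.mem_powersetCard]
          refine ⟨Finset.subset_erase.2 ⟨?_, (hDmem B hBD).1⟩, (hDmem B hBD).2⟩
          have h1 : B ⊆ Φ B := by
            simp only [hΦ]
            exact (Finset.subset_insert _ _).trans (Finset.subset_insert _ _)
          rw [hBT'] at h1
          exact h1
        calc (D.filter fun B => Φ B = T').card
            ≤ ((T'.erase u).powersetCard (r - 1)).card := Finset.card_le_card hsub2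
          _ = (T'.erase u).card.choose (r - 1) := Finset.card_powersetCard _ _
          _ = r := by
              rw [Finset.card_erase_of_mem huT', cardH' T' hT']
              simp only [Nat.add_sub_cancel]
              exact hchoose_r
      · exact (core T' hT' huT').1
    have hDcard : D.card = (n - 1).choose (r - 1) := by
      rw [hD, Finset.card_powersetCard, Finset.card_erase_of_mem (Finset.mem_univ u),
        Finset.card_univ, hn]
    have hfib := Finset.card_eq_sum_card_fiberwise hΦH'
    have hsum2 : (∑ T' ∈ H', (D.filter fun B => Φ B = T').card) = ∑ T' ∈ H', r := by
      rw [← hfib, hDcard, ← hsize, Finset.sum_const, smul_eq_mul, Nat.mul_comm]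
    have hall := (Finset.sum_eq_sum_iff_of_le bound).1 hsum2
    exact (core T hT huT).2 (hall T hT)
  -- ENDGAME
  by_cases hSH : S ∈ H
  · -- case S ∈ H
    obtain ⟨v, hv⟩ := Finset.card_pos.1 (show 0 < S.card by rw [hS]; omega)
    have hyS := frSpec S hS
    have hTS : insert (fr S) S ∈ H' := covMem S hSH
    have hySn : fr S ∉ S := hyS.1
    have hSsub : S ⊆ insert (fr S) S := Finset.subset_insert _ _
    have hAS : S.erase v ⊆ S := Finset.erase_subset _ _
    have hAc : (S.erase v).card = r - 1 := by rw [Finset.card_erase_of_mem hv, hS]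
    have hSA : insert v (S.erase v) = S := Finset.insert_erase hv
    have h2e := hsoc (S.erase v) hAS hAc
    obtain ⟨T₁, hT₁f, hT₁ne⟩ :=
      Finset.exists_mem_ne (s := H'.filter fun q => S.erase v ⊆ q)
        (by omega) (insert (fr S) S)
    obtain ⟨hT₁, hAT₁⟩ := Finset.mem_filter.1 hT₁f
    have hvT₁ : v ∉ T₁ := by
      intro hc
      apply hT₁ne
      refine edgeUnique T₁ hT₁ _ hTS S ?_ hSsub hS
      rw [← hSA]
      exact Finset.insert_subset hc hAT₁
    have hpair : (T₁ \ S.erase v).card = 2 := by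
      rw [Finset.card_sdiff_of_subset hAT₁, cardH' T₁ hT₁, hAc]; omega
    obtain ⟨p, q, hpq, hpqe⟩ := Finset.card_eq_two.1 hpair
    have hTpq : T₁ \ {p, q} = S.erase v := by
      rw [← hpqe, Finset.sdiff_sdiff_self_left, Finset.inter_eq_right.2 hAT₁]
    have hpmem : p ∈ T₁ ∧ p ∉ S.erase v := by
      have h1 : p ∈ T₁ \ S.erase v := by rw [hpqe]; exact Finset.mem_insert_self _ _
      exact Finset.mem_sdiff.1 h1
    have hpS : p ∉ S := by
      intro hc
      rw [← hSA, Finset.mem_insert] at hc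
      rcases hc with hc | hc
      · rw [hc] at hpmem; exact hvT₁ hpmem.1
      · exact hpmem.2 hc
    have hpTS : p ∉ insert (fr S) S := by
      intro hc
      apply hT₁ne
      refine edgeUnique T₁ hT₁ _ hTS (insert p (S.erase v))
        (Finset.insert_subset hpmem.1 hAT₁)
        (Finset.insert_subset hc (hAS.trans hSsub)) ?_
      rw [Finset.card_insert_of_notMem hpmem.2, hAc]; omega
    have hpAH : insert p (S.erase v) ∈ H := by
      refine subMemH T₁ hT₁ _ (Finset.insert_subset hpmem.1 hAT₁) ?_
      rw [Finset.card_insert_of_notMem hpmem.2, hAc]; omega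
    obtain ⟨w, hwT, huncov1, hcov1⟩ := star p _ hTS hpTS
    have hsetvy : insert (fr S) S \ {v, fr S} = S.erase v := by
      ext a
      simp only [Finset.mem_sdiff, Finset.mem_insert, Finset.mem_singleton, Finset.mem_erase]
      constructor
      · rintro ⟨h1 | h1, h2⟩
        · exact absurd (Or.inr h1) h2
        · push_neg at h2
          exact ⟨h2.1, h1⟩
      · rintro ⟨h1, h2⟩
        refine ⟨Or.inr h2, ?_⟩
        rintro (hc | hc)
        · exact h1 hc
        · rw [hc] at h2; exact hySn h2
    have hwv : w ≠ v := by
      intro hc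
      have hyne : (fr S) ≠ w := by
        rw [hc]; intro h2; rw [h2] at hySn; exact hySn hv
      have h5 := huncov1 (fr S) (Finset.mem_insert_self _ _) hyne
      apply h5.1
      have h6 : insert (fr S) S \ {fr S, w} = S.erase v := by
        rw [hc, Finset.pair_comm, hsetvy]
      rw [h6]
      exact hpAH
    have hwy : w ≠ fr S := by
      intro hc
      have hvne : v ≠ w := by
        rw [hc]; intro h2; rw [← h2] at hySn; exact hySn hv
      have h5 := huncov1 v (hSsub hv) hvne
      apply h5.1
      have h6 : insert (fr S) S \ {v, w} = S.erase v := by rw [hc, hsetvy]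
      rw [h6]
      exact hpAH
    have hwS : w ∈ S := by
      rcases Finset.mem_insert.1 hwT with h | h
      · exact absurd h hwy
      · exact h
    have hsetyw : insert (fr S) S \ {fr S, w} = S.erase w := by
      ext a
      simp only [Finset.mem_sdiff, Finset.mem_insert, Finset.mem_singleton, Finset.mem_erase]
      constructor
      · rintro ⟨h1 | h1, h2⟩
        · exact absurd (Or.inl h1) h2
        · push_neg at h2
          exact ⟨h2.2, h1⟩
      · rintro ⟨h1, h2⟩
        refine ⟨Or.inr h2, ?_⟩
        rintro (hc | hc)
        · rw [hc] at h2; exact hySn h2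
        · exact h1 hc
    have hK := huncov1 (fr S) (Finset.mem_insert_self _ _) (fun hc => hwy hc.symm)
    rw [hsetyw] at hK
    have hA'S : S.erase w ⊆ S := Finset.erase_subset _ _
    have hA'c : (S.erase w).card = r - 1 := by rw [Finset.card_erase_of_mem hwS, hS]
    have h2e' := hsoc (S.erase w) hA'S hA'c
    obtain ⟨T', hT'f, hT'ne⟩ :=
      Finset.exists_mem_ne (s := H'.filter fun q => S.erase w ⊆ q)
        (by omega) (insert (fr S) S)
    obtain ⟨hT', hA'T'⟩ := Finset.mem_filter.1 hT'f
    have hwT' : w ∉ T' := by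
      intro hc
      apply hT'ne
      refine edgeUnique T' hT' _ hTS S ?_ hSsub hS
      rw [← Finset.insert_erase hwS]
      exact Finset.insert_subset hc hA'T'
    have hpA' : p ∉ S.erase w := fun hc => hpS (hA'S hc)
    have hKcard : (insert p (S.erase w)).card = r := by
      rw [Finset.card_insert_of_notMem hpA', hA'c]; omega
    have hpT' : p ∉ T' := by
      intro hc
      apply hK.1
      exact subMemH T' hT' _ (Finset.insert_subset hc hA'T') hKcard
    obtain ⟨c, hcT, huncov2, hcov2⟩ := star p T' hT' hpT'
    have hpair2 : (T' \ S.erase w).card = 2 := by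
      rw [Finset.card_sdiff_of_subset hA'T', cardH' T' hT', hA'c]; omega
    obtain ⟨s, t, hst, hste⟩ := Finset.card_eq_two.1 hpair2
    have hT'st : T' \ {s, t} = S.erase w := by
      rw [← hste, Finset.sdiff_sdiff_self_left, Finset.inter_eq_right.2 hA'T']
    have hsmem : s ∈ T' := by
      have h1 : s ∈ T' \ S.erase w := by rw [hste]; exact Finset.mem_insert_self _ _
      exact (Finset.mem_sdiff.1 h1).1
    have htmem : t ∈ T' := by
      have h1 : t ∈ T' \ S.erase w := by
        rw [hste]; exact Finset.mem_insert_of_mem (Finset.mem_singleton_self _)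
      exact (Finset.mem_sdiff.1 h1).1
    have hcst : c = s ∨ c = t := by
      by_contra hc
      push_neg at hc
      have h6 := hcov2 s hsmem t htmem hst (fun h => hc.1 h.symm) (fun h => hc.2 h.symm)
      rw [hT'st] at h6
      exact hK.1 h6
    have hcK : c ∉ insert p (S.erase w) ∧
        ∀ A ⊆ insert p (S.erase w), A.card = r - 1 → insert c A ∈ H := by
      rcases hcst with h | h
      · have h5 := huncov2 t htmem (by rw [h]; exact fun hc => hst hc.symm)
        have hset2 : T' \ {t, c} = S.erase w := by rw [h, Finset.pair_comm, hT'st]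
        rw [hset2] at h5
        exact ⟨h5.2.1, h5.2.2⟩
      · have h5 := huncov2 s hsmem (by rw [h]; exact hst)
        have hset2 : T' \ {s, c} = S.erase w := by rw [h, hT'st]
        rw [hset2] at h5
        exact ⟨h5.2.1, h5.2.2⟩
    have hcw : c = w :=
      (hfriend (insert p (S.erase w)) hKcard).unique ⟨hcK.1, hcK.2⟩ ⟨hK.2.1, hK.2.2⟩
    rw [hcw] at hcT
    exact hwT' hcT
  · -- case S ∉ H
    obtain ⟨v, hv⟩ := Finset.card_pos.1 (show 0 < S.card by rw [hS]; omega)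
    have hAS : S.erase v ⊆ S := Finset.erase_subset _ _
    have hAc : (S.erase v).card = r - 1 := by rw [Finset.card_erase_of_mem hv, hS]
    have hSA : insert v (S.erase v) = S := Finset.insert_erase hv
    have h2e := hsoc (S.erase v) hAS hAc
    obtain ⟨T₁, hT₁m, T₂, hT₂m, hT12⟩ := Finset.one_lt_card.1
      (show 1 < (H'.filter fun q => S.erase v ⊆ q).card by omega)
    obtain ⟨hT₁, hAT₁⟩ := Finset.mem_filter.1 hT₁m
    obtain ⟨hT₂, hAT₂⟩ := Finset.mem_filter.1 hT₂m
    have getF : ∀ T, T ∈ H' → S.erase v ⊆ T → ∃ z, z ∈ T ∧ z ∉ S.erase v ∧ z ∉ S ∧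
        ∀ A' ⊆ S, A'.card = r - 1 → insert z A' ∈ H := by
      intro T hT hAT
      have hvT : v ∉ T := by
        intro hc
        apply hSH
        refine subMemH T hT S ?_ hS
        rw [← hSA]
        exact Finset.insert_subset hc hAT
      obtain ⟨z, hzT, huncov, hcov⟩ := star v T hT hvT
      have hpair : (T \ S.erase v).card = 2 := by
        rw [Finset.card_sdiff_of_subset hAT, cardH' T hT, hAc]; omega
      obtain ⟨p, q, hpq, hpqe⟩ := Finset.card_eq_two.1 hpair
      have hTpq : T \ {p, q} = S.erase v := by
        rw [← hpqe, Finset.sdiff_sdiff_self_left, Finset.inter_eq_right.2 hAT]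
      have hpmem : p ∈ T ∧ p ∉ S.erase v := by
        have h1 : p ∈ T \ S.erase v := by rw [hpqe]; exact Finset.mem_insert_self _ _
        exact Finset.mem_sdiff.1 h1
      have hqmem : q ∈ T ∧ q ∉ S.erase v := by
        have h1 : q ∈ T \ S.erase v := by
          rw [hpqe]; exact Finset.mem_insert_of_mem (Finset.mem_singleton_self _)
        exact Finset.mem_sdiff.1 h1
      have hzpq : z = p ∨ z = q := by
        by_contra hc
        push_neg at hc
        have h6 := hcov p hpmem.1 q hqmem.1 hpq (fun h => hc.1 h.symm) (fun h => hc.2 h.symm)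
        rw [hTpq, hSA] at h6
        exact hSH h6
      have hmain : z ∉ insert v (S.erase v) ∧
          ∀ A' ⊆ insert v (S.erase v), A'.card = r - 1 → insert z A' ∈ H := by
        rcases hzpq with h | h
        · have h5 := huncov q hqmem.1 (by rw [h]; exact fun hc => hpq hc.symm)
          have hset : T \ {q, z} = S.erase v := by rw [h, Finset.pair_comm, hTpq]
          rw [hset] at h5
          exact ⟨h5.2.1, h5.2.2⟩
        · have h5 := huncov p hpmem.1 (by rw [h]; exact hpq)
          have hset : T \ {p, z} = S.erase v := by rw [h, hTpq]
          rw [hset] at h5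
          exact ⟨h5.2.1, h5.2.2⟩
      rw [hSA] at hmain
      have hznA : z ∉ S.erase v := by
        rcases hzpq with h | h
        · rw [h]; exact hpmem.2
        · rw [h]; exact hqmem.2
      exact ⟨z, hzT, hznA, hmain.1, hmain.2⟩
    obtain ⟨z₁, hz₁T, hz₁A, hz₁S, hz₁F⟩ := getF T₁ hT₁ hAT₁
    obtain ⟨z₂, hz₂T, hz₂A, hz₂S, hz₂F⟩ := getF T₂ hT₂ hAT₂
    have hz12 : z₁ = z₂ := (hfriend S hS).unique ⟨hz₁S, hz₁F⟩ ⟨hz₂S, hz₂F⟩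
    apply hT12
    refine edgeUnique T₁ hT₁ T₂ hT₂ (insert z₁ (S.erase v))
      (Finset.insert_subset hz₁T hAT₁) ?_ ?_
    · rw [hz12]
      exact Finset.insert_subset hz₂T hAT₂
    · rw [Finset.card_insert_of_notMem hz₁A, hAc]; omega
end
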